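/- arXiv:1806.05737 — 7 statements merged into one kernel-verified Lean document; each statement's English description precedes it below -/
import Mathlib

section
/- Let d ≤ n be natural numbers and let A ⊆ 2^[n] be a family of subsets of [n]. If VC-dim(A △ A) ≤ d, where A △ A = {S △ T : S, T ∈ A} and △ denotes symmetric difference, then |A| ≤ 2·C(n, ≤ ⌊d/2⌋). -/
/-!
Every function on a set family `𝒜` agrees on `𝒜` with a combination of the monomials
`x ↦ [t ⊆ x]` over sets `t` shattered by `𝒜`. For `𝒜 = A △ A` and the indicator of `∅` this
gives coefficients `c`, supported on sets of size `≤ d`, with `∑_{t ⊆ a △ b} c t = [a = b]` for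
`a, b ∈ A`. Over `ZMod 2`, `[s ⊆ a △ b]` counts the splittings `s = t ⊔ u` with `t ⊆ a`, `u ⊆ b`,
so the identity matrix on `A` factors as `X Q Xᵀ` with `X a t = [t ⊆ a]` and
`Q t u = c (t ∪ u)` for disjoint `t, u`. A nonzero entry of `Q` has `|t| + |u| ≤ d`, so its row or
its column is indexed by a set of size `≤ ⌊d/2⌋`; hence `|A| ≤ rank Q` is at most twice the number
of such sets.
-/

open Finset
open scoped Matrix

namespace Finset

section Shatters

variable {α : Type*} [DecidableEq α] {𝒜 : Finset (Finset α)} {s : Finset α} {a : α}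

lemma Shatters.of_image_erase (hs : (𝒜.image (erase · a)).Shatters s) : 𝒜.Shatters s := by
  have has : a ∉ s := by
    obtain ⟨_, hv, hsu⟩ := hs.exists_superset
    obtain ⟨u, -, rfl⟩ := mem_image.1 hv
    exact notMem_mono hsu (notMem_erase a u)
  intro t ht
  obtain ⟨_, hv, rfl⟩ := hs ht
  obtain ⟨u, hu, rfl⟩ := mem_image.1 hv
  exact ⟨u, hu, by rw [inter_erase, erase_eq_of_notMem fun h => has (mem_inter.1 h).1]⟩

lemma Shatters.insert_of_memberSubfamily_inter
    (hs : (𝒜.memberSubfamily a ∩ 𝒜.nonMemberSubfamily a).Shatters s) :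
    𝒜.Shatters (insert a s) := by
  intro t ht
  rw [subset_insert_iff] at ht
  obtain ⟨u, hu, hsu⟩ := hs ht
  rw [mem_inter, mem_memberSubfamily, mem_nonMemberSubfamily] at hu
  by_cases hat : a ∈ t
  · refine ⟨insert a u, hu.1.1, ?_⟩
    rw [← insert_inter_distrib, hsu, insert_erase hat]
  · refine ⟨u, hu.2.1, ?_⟩
    rw [insert_inter_of_notMem hu.2.2, hsu, erase_eq_of_notMem hat]

end Shatters

section Interpolation

variable {α M : Type*} [DecidableEq α] [AddCommGroup M]

lemma sum_powerset_ite_mem (a : α) (G H : Finset α → M) (s : Finset α) :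
    ∑ t ∈ s.powerset, (if a ∈ t then H (t.erase a) else G t) =
      ∑ t ∈ (s.erase a).powerset, G t +
        if a ∈ s then ∑ t ∈ (s.erase a).powerset, H t else 0 := by
  have hG : ∑ t ∈ (s.erase a).powerset, (if a ∈ t then H (t.erase a) else G t) =
      ∑ t ∈ (s.erase a).powerset, G t :=
    sum_congr rfl fun t ht => if_neg fun hat => notMem_erase a s (mem_powerset.1 ht hat)
  by_cases has : a ∈ s
  · conv_lhs => rw [← insert_erase has]
    rw [sum_powerset_insert (notMem_erase a s), hG, if_pos has]
    refine congrArg _ (sum_congr rfl fun t ht => ?_)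
    rw [if_pos (mem_insert_self a t),
      erase_insert fun hat => notMem_erase a s (mem_powerset.1 ht hat)]
  · rw [if_neg has, add_zero, ← hG, erase_eq_of_notMem has]

theorem exists_shattered_support_sum_powerset_eq (𝒜 : Finset (Finset α)) (F : Finset α → M) :
    ∃ c : Finset α → M, (∀ t, c t ≠ 0 → 𝒜.Shatters t) ∧
      ∀ s ∈ 𝒜, ∑ t ∈ s.powerset, c t = F s := by
  obtain ⟨u, hu⟩ : ∃ u, ∀ s ∈ 𝒜, s ⊆ u := ⟨𝒜.sup id, fun s => le_sup (f := id)⟩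
  induction u using Finset.induction generalizing 𝒜 F with
  | empty =>
    refine ⟨fun t => if t ∈ 𝒜 then F t else 0, fun t ht => ?_, fun s hs => ?_⟩
    · have htA : t ∈ 𝒜 := of_not_not fun h => ht (if_neg h)
      obtain rfl := subset_empty.1 (hu t htA)
      exact shatters_empty.2 ⟨_, htA⟩
    · obtain rfl := subset_empty.1 (hu s hs)
      simp [hs]
  | insert a u _ ih =>
    -- Coefficients of monomials avoiding `a` interpolate on `𝒜` with `a` erased; those of
    -- monomials containing `a` interpolate the jump `F (insert a s) - F s` on the sets `s`
    -- occurring in `𝒜` both with and without `a`.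
    have hℬ : ∀ s ∈ 𝒜.image (erase · a), s ⊆ u := by
      simp only [mem_image, forall_exists_index, and_imp, forall_apply_eq_imp_iff₂]
      exact fun s hs => subset_insert_iff.1 (hu s hs)
    have h𝒞 : ∀ s ∈ 𝒜.memberSubfamily a ∩ 𝒜.nonMemberSubfamily a, s ⊆ u := by
      simp only [mem_inter, mem_nonMemberSubfamily, and_imp]
      exact fun s _ hs has => (subset_insert_iff_of_notMem has).1 (hu s hs)
    obtain ⟨H, hH, hHF⟩ := ih _ (fun s => F (insert a s) - F s) h𝒞
    obtain ⟨G, hG, hGF⟩ := ih _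
      (fun s => if s ∈ 𝒜 then F s else F (insert a s) - ∑ t ∈ s.powerset, H t) hℬ
    refine ⟨fun t => if a ∈ t then H (t.erase a) else G t, fun t ht => ?_, fun s hs => ?_⟩
    · dsimp only at ht
      split_ifs at ht with hat
      · rw [← insert_erase hat]
        exact (hH _ ht).insert_of_memberSubfamily_inter
      · exact (hG t ht).of_image_erase
    rw [sum_powerset_ite_mem, hGF _ (mem_image_of_mem _ hs)]
    by_cases has : a ∈ s
    · have hmem : s.erase a ∈ 𝒜.memberSubfamily a :=
        mem_memberSubfamily.2 ⟨by rwa [insert_erase has], notMem_erase a s⟩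
      rw [if_pos has]
      split_ifs with h
      · rw [hHF _ (mem_inter.2 ⟨hmem, mem_nonMemberSubfamily.2 ⟨h, notMem_erase a s⟩⟩),
          insert_erase has]
        abel
      · rw [insert_erase has]
        abel
    · simp only [erase_eq_of_notMem has, if_pos hs, if_neg has, add_zero]

end Interpolation

section SymmDiff

variable {α : Type*} [DecidableEq α]

lemma ite_subset_eq_prod {R : Type*} [CommMonoidWithZero R] (s t : Finset α) :
    (if s ⊆ t then 1 else 0 : R) = ∏ i ∈ s, if i ∈ t then 1 else 0 := by
  rw [prod_boole]
  rfl

lemma sum_powerset_ite_subset_mul_ite_sdiff_subset {R : Type*} [CommRing R] [CharP R 2]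
    (a b s : Finset α) :
    ∑ t ∈ s.powerset, (if t ⊆ a then 1 else 0 : R) * (if s \ t ⊆ b then 1 else 0) =
      if s ⊆ symmDiff a b then 1 else 0 := by
  simp_rw [ite_subset_eq_prod, ← prod_add]
  refine prod_congr rfl fun i _ => ?_
  by_cases hia : i ∈ a <;> by_cases hib : i ∈ b <;>
    simp [mem_symmDiff, hia, hib, CharTwo.add_self_eq_zero]

lemma sum_sum_powerset_sdiff_eq_sum_sum_disjoint {M : Type*} [AddCommMonoid M] [Fintype α]
    (f : Finset α → Finset α → M) :
    ∑ s, ∑ t ∈ s.powerset, f t (s \ t) = ∑ t, ∑ u, if Disjoint t u then f t u else 0 := by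
  simp_rw [← sum_filter]
  rw [sum_comm' (t' := univ) (s' := fun t => {s | t ⊆ s}) (by simp)]
  refine sum_congr rfl fun t _ => sum_nbij' (· \ t) (t ∪ ·) ?_ ?_ ?_ ?_ fun _ _ => rfl
  · simp [disjoint_sdiff]
  · simp
  · intro s hs
    simp_all
  · intro u hu
    simp_all [union_sdiff_cancel_left]

lemma sum_powerset_symmDiff_eq_sum_sum {R : Type*} [CommRing R] [CharP R 2] [Fintype α]
    (c : Finset α → R) (a b : Finset α) :
    ∑ s ∈ (symmDiff a b).powerset, c s =
      ∑ t, ∑ u, (if t ⊆ a then 1 else 0) * (if Disjoint t u then c (t ∪ u) else 0) *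
        (if u ⊆ b then 1 else 0) := by
  calc ∑ s ∈ (symmDiff a b).powerset, c s
      = ∑ s, c s * ∑ t ∈ s.powerset, (if t ⊆ a then 1 else 0) * (if s \ t ⊆ b then 1 else 0) := by
        simp_rw [sum_powerset_ite_subset_mul_ite_sdiff_subset, mul_ite, mul_one, mul_zero,
          ← sum_filter]
        congr 1
        ext s
        simp
    _ = ∑ s, ∑ t ∈ s.powerset,
          c (t ∪ s \ t) * ((if t ⊆ a then 1 else 0) * (if s \ t ⊆ b then 1 else 0)) := by
        refine sum_congr rfl fun s _ => ?_
        rw [mul_sum]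
        refine sum_congr rfl fun t ht => ?_
        rw [union_sdiff_of_subset (mem_powerset.1 ht)]
    _ = ∑ t, ∑ u, if Disjoint t u then
          c (t ∪ u) * ((if t ⊆ a then 1 else 0) * (if u ⊆ b then 1 else 0)) else 0 :=
        sum_sum_powerset_sdiff_eq_sum_sum_disjoint fun t u =>
          c (t ∪ u) * ((if t ⊆ a then 1 else 0) * (if u ⊆ b then 1 else 0))
    _ = _ := sum_congr rfl fun t _ => sum_congr rfl fun u _ => by split_ifs <;> ring

end SymmDiff

section Card

variable {α : Type*} [Fintype α]

lemma card_filter_card_le_le_sum_choose (k : ℕ) :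
    #{s : Finset α | #s ≤ k} ≤ ∑ i ∈ range (k + 1), (Fintype.card α).choose i := by
  classical
  simp_rw [← card_univ, ← card_powersetCard]
  refine (card_le_card fun s hs => mem_biUnion.2 ⟨#s, ?_, mem_powersetCard_univ.2 rfl⟩).trans
    card_biUnion_le
  simpa [Nat.lt_succ_iff] using hs

end Card

end Finset

namespace Matrix

variable {m n K : Type*} [Fintype m] [Fintype n] [Field K]

lemma rank_add_le (A B : Matrix m n K) : (A + B).rank ≤ A.rank + B.rank := by
  simp only [rank_eq_finrank_span_cols]
  refine le_trans (Submodule.finrank_mono ?_) (Submodule.finrank_add_le_finrank_add_finrank _ _)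
  rw [Submodule.span_le]
  rintro _ ⟨j, rfl⟩
  exact Submodule.add_mem_sup (Submodule.subset_span ⟨j, rfl⟩) (Submodule.subset_span ⟨j, rfl⟩)

lemma rank_le_card_add_card_of_forall_ne_zero (A : Matrix m n K) (s : Finset m) (t : Finset n)
    (h : ∀ i j, A i j ≠ 0 → i ∈ s ∨ j ∈ t) : A.rank ≤ #s + #t := by
  classical
  set B : Matrix m n K := of fun i j => if i ∈ s then A i j else 0
  have hB : B.rank ≤ #s := B.rank_le_card_of_support_subset s fun i hi =>
    by_contra fun his => hi (funext fun j => if_neg his)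
  have hC : (A - B).rank ≤ #t := by
    rw [← rank_transpose]
    refine (A - B)ᵀ.rank_le_card_of_support_subset t fun j hj => by_contra fun hjt => hj ?_
    funext i
    by_cases his : i ∈ s
    · simp [B, his]
    · simpa [B, his] using not_imp_comm.1 (h i j) (by simpa [his] using hjt)
  calc A.rank = (B + (A - B)).rank := by rw [add_sub_cancel]
    _ ≤ #s + #t := (rank_add_le _ _).trans (add_le_add hB hC)

end Matrix

theorem sauer_shelah_perles_for_sumsets_general (n d : ℕ)
    (A : Finset (Finset (Fin n)))
    (hvc : (Finset.image₂ symmDiff A A).vcDim ≤ d) :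
    A.card ≤ 2 * ∑ i ∈ Finset.range (d / 2 + 1), n.choose i := by
  obtain ⟨c, hc, hcδ⟩ := exists_shattered_support_sum_powerset_eq (image₂ symmDiff A A)
    fun s => if s = ∅ then (1 : ZMod 2) else 0
  let X : Matrix A (Finset (Fin n)) (ZMod 2) := .of fun a t => if t ⊆ a then 1 else 0
  let Q : Matrix (Finset (Fin n)) (Finset (Fin n)) (ZMod 2) :=
    .of fun t u => if Disjoint t u then c (t ∪ u) else 0
  have hXQX : X * Q * Xᵀ = 1 := by
    ext a b
    simp only [X, Q, Matrix.mul_apply, Matrix.of_apply, Matrix.transpose_apply, sum_mul]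
    rw [sum_comm, ← sum_powerset_symmDiff_eq_sum_sum, hcδ _ (mem_image₂_of_mem a.2 b.2),
      Matrix.one_apply]
    simp only [← bot_eq_empty, symmDiff_eq_bot, Subtype.ext_iff]
  let I : Finset (Finset (Fin n)) := {s | #s ≤ d / 2}
  have hQ : ∀ t u, Q t u ≠ 0 → t ∈ I ∨ u ∈ I := by
    intro t u htu
    simp only [Q, Matrix.of_apply, ne_eq, ite_eq_right_iff, not_forall] at htu
    obtain ⟨hdisj, hctu⟩ := htu
    have := (hc _ hctu).card_le_vcDim.trans hvc
    rw [card_union_of_disjoint hdisj] at this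
    simp only [I, mem_filter, mem_univ, true_and]
    omega
  calc #A = (1 : Matrix A A (ZMod 2)).rank := by rw [Matrix.rank_one, Fintype.card_coe]
    _ = (X * Q * Xᵀ).rank := by rw [hXQX]
    _ ≤ Q.rank := ((X * Q).rank_mul_le_left _).trans (X.rank_mul_le_right _)
    _ ≤ #I + #I := Q.rank_le_card_add_card_of_forall_ne_zero I I hQ
    _ ≤ _ := by
      have := card_filter_card_le_le_sum_choose (α := Fin n) (d / 2)
      rw [Fintype.card_fin] at this
      simp only [I]
      omega

/-- **A Sauer–Shelah–Perles Lemma for sumsets.**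
If the family `A △ A = {S △ T : S, T ∈ A}` of symmetric differences has
VC dimension at most `d`, then `|A| ≤ 2 · C(n, ≤ ⌊d/2⌋)`. -/
theorem sauer_shelah_perles_for_sumsets (n d : ℕ) (hdn : d ≤ n)
    (A : Finset (Finset (Fin n)))
    (hvc : (Finset.image₂ symmDiff A A).vcDim ≤ d) :
    A.card ≤ 2 * ∑ i ∈ Finset.range (d / 2 + 1), n.choose i :=
  sauer_shelah_perles_for_sumsets_general n d A hvc
end

section
/- Let d ≤ n be natural numbers and let A ⊆ F_2^n. If |A| > 2·C(n, ≤ ⌊d/2⌋), then int-deg(A + A) > d, where A + A = {a + b : a, b ∈ A} is the sumset of A in F_2^n. -/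
/-!
Take `f` to be the indicator of `0` and suppose a multilinear `P` of degree `≤ d` agreed with it on
`A + A`. In characteristic two the `A × A` matrix `(P (a + b))` is then the identity, of rank `|A|`.
Expanding `P (x + y) = ∑_T x^T · ∂_T P (y)`, every monomial of `P` splits its variables so that
either `|T| ≤ ⌊d/2⌋` or `y` carries at most `⌊d/2⌋` of them. Hence each row `y ↦ P (a + y)` lies in
the span of the `∂_T P` and the monomials `y^U` with `|T|, |U| ≤ ⌊d/2⌋`, so the rank is at most
`2 · C(n, ≤ ⌊d/2⌋)`.
-/

open Pointwise

open Finset MvPolynomial Submodule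

def Finset.powersetCardLE {α : Type*} (h : ℕ) (s : Finset α) : Finset (Finset α) :=
  {t ∈ s.powerset | #t ≤ h}

@[simp]
theorem Finset.mem_powersetCardLE {α : Type*} {h : ℕ} {s t : Finset α} :
    t ∈ s.powersetCardLE h ↔ t ⊆ s ∧ #t ≤ h := by
  simp [powersetCardLE]

theorem Finset.card_powersetCardLE {α : Type*} (h : ℕ) (s : Finset α) :
    #(s.powersetCardLE h) = ∑ i ∈ range (h + 1), (#s).choose i := by
  classical
  rw [card_eq_sum_card_fiberwise (f := card) (t := range (h + 1))
    fun t ht => by simpa [Nat.lt_succ_iff] using (mem_powersetCardLE.mp ht).2]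
  refine sum_congr rfl fun i hi => ?_
  rw [← card_powersetCard, powersetCard_eq_filter, powersetCardLE, filter_filter]
  exact congrArg card (filter_congr fun t _ => by rw [mem_range] at hi; omega)

theorem card_le_card_of_mem_span_of_eq_ite {K X : Type*} [Field K] [DecidableEq X] {A : Finset X}
    {s : Finset (X → K)} {F : X → X → K} (hF : ∀ a ∈ A, F a ∈ span K (s : Set (X → K)))
    (hdiag : ∀ a ∈ A, ∀ b ∈ A, F a b = if a = b then 1 else 0) : #A ≤ #s := by
  let v : A → span K (s : Set (X → K)) := fun a => ⟨F a, hF a a.2⟩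
  have hrestrict : LinearMap.funLeft K K Subtype.val ∘ (span K (s : Set (X → K))).subtype ∘ v =
      Pi.basisFun K A := by
    ext a b
    simp only [Function.comp_apply, LinearMap.funLeft_apply, Submodule.subtype_apply, v,
      Pi.basisFun_apply, hdiag a a.2 b b.2, Pi.single_apply, Subtype.ext_iff, eq_comm]
  have hv : LinearIndependent K v :=
    (hrestrict ▸ (Pi.basisFun K A).linearIndependent).of_comp _ |>.of_comp _
  simpa using hv.fintype_card_le_finrank.trans (finrank_span_finset_le_card s)

namespace MvPolynomial

variable {R σ : Type*}

theorem card_support_le_totalDegree [CommSemiring R] {P : MvPolynomial σ R} {m : σ →₀ ℕ}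
    (hm : m ∈ P.support) : #m.support ≤ P.totalDegree :=
  calc #m.support = ∑ _ ∈ m.support, 1 := card_eq_sum_ones _
    _ ≤ ∑ i ∈ m.support, m i :=
      sum_le_sum fun _ hi => Nat.one_le_iff_ne_zero.mpr (Finsupp.mem_support_iff.mp hi)
    _ ≤ P.totalDegree := le_totalDegree hm

variable [CommRing R] {P : MvPolynomial σ R}

theorem eval_eq_sum_prod_support_of_degreeOf_le_one (hP : ∀ i, P.degreeOf i ≤ 1) (x : σ → R) :
    eval x P = ∑ m ∈ P.support, P.coeff m * ∏ i ∈ m.support, x i := by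
  refine sum_congr rfl fun m hm => congrArg _ (prod_congr rfl fun i hi => ?_)
  have : m i = 1 := le_antisymm ((monomial_le_degreeOf i hm).trans (hP i))
    (Nat.one_le_iff_ne_zero.mpr (Finsupp.mem_support_iff.mp hi))
  simp [this]

variable [DecidableEq σ]

/-- For multilinear `P` this is the partial derivative `∂_T P` evaluated at `y`. -/
noncomputable def multilinearTaylorCoeff (P : MvPolynomial σ R) (T : Finset σ) (y : σ → R) : R :=
  ∑ m ∈ P.support with T ⊆ m.support, P.coeff m * ∏ i ∈ m.support \ T, y i

theorem multilinearTaylorCoeff_mem_span [Fintype σ] [DecidableEq ((σ → R) → R)]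
    {T : Finset σ} {h : ℕ} (hT : P.totalDegree ≤ h + #T) :
    P.multilinearTaylorCoeff T ∈
      span R ↑((univ.powersetCardLE h).image fun U (y : σ → R) => ∏ i ∈ U, y i) := by
  have : P.multilinearTaylorCoeff T =
      ∑ m ∈ P.support with T ⊆ m.support,
        P.coeff m • fun y : σ → R => ∏ i ∈ m.support \ T, y i := by
    ext y
    simp [multilinearTaylorCoeff, Finset.sum_apply]
  rw [this]
  refine sum_mem fun m hm => smul_mem _ _ (subset_span ?_)
  rw [mem_filter] at hm
  have := card_support_le_totalDegree hm.1
  refine mem_image_of_mem _ (mem_powersetCardLE.mpr ⟨subset_univ _, ?_⟩)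
  rw [card_sdiff_of_subset hm.2]
  omega

variable [Fintype σ]

theorem eval_add_eq_sum_multilinearTaylorCoeff (hP : ∀ i, P.degreeOf i ≤ 1) (x y : σ → R) :
    eval (x + y) P = ∑ T, (∏ i ∈ T, x i) * P.multilinearTaylorCoeff T y := by
  simp only [eval_eq_sum_prod_support_of_degreeOf_le_one hP, multilinearTaylorCoeff, Pi.add_apply,
    prod_add, mul_sum]
  refine (sum_comm' fun m T => by simp [mem_filter]).trans
    (sum_congr rfl fun T _ => sum_congr rfl fun m _ => by ring)

theorem eval_add_mem_span [DecidableEq ((σ → R) → R)] {h : ℕ} (hP : ∀ i, P.degreeOf i ≤ 1)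
    (hdeg : P.totalDegree ≤ 2 * h + 1) (x : σ → R) :
    (fun y => eval (x + y) P) ∈ span R ↑((univ.powersetCardLE h).image P.multilinearTaylorCoeff ∪
        (univ.powersetCardLE h).image fun U (y : σ → R) => ∏ i ∈ U, y i) := by
  have : (fun y => eval (x + y) P) = ∑ T, (∏ i ∈ T, x i) • P.multilinearTaylorCoeff T := by
    ext y
    simp [eval_add_eq_sum_multilinearTaylorCoeff hP, Finset.sum_apply]
  rw [this, coe_union]
  refine sum_mem fun T _ => smul_mem _ _ ?_
  by_cases hT : #T ≤ h
  · exact subset_span (Or.inl (mem_image_of_mem _ (by simpa using hT)))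
  · exact span_mono Set.subset_union_right (multilinearTaylorCoeff_mem_span (by omega))

end MvPolynomial

theorem int_deg_sumset_gt_general (n d : ℕ) (A : Finset (Fin n → ZMod 2))
    (hA : A.card > 2 * ∑ i ∈ Finset.range (d / 2 + 1), n.choose i) :
    ∃ f : (Fin n → ZMod 2) → ZMod 2,
      ¬ ∃ P : MvPolynomial (Fin n) (ZMod 2),
          (∀ i, P.degreeOf i ≤ 1) ∧ P.totalDegree ≤ d ∧
          ∀ a ∈ A + A, MvPolynomial.eval a P = f a := by
  classical
  refine ⟨fun x => if x = 0 then 1 else 0, ?_⟩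
  rintro ⟨P, hP, hdeg, hPA⟩
  have hrank := card_le_card_of_mem_span_of_eq_ite (A := A) (F := fun a b => eval (a + b) P)
    (fun a _ => eval_add_mem_span (h := d / 2) hP (by omega) a) fun a ha b hb => by
      rw [hPA _ (add_mem_add ha hb)]
      simp only [← ZModModule.sub_eq_add, sub_eq_zero]
  have hspan := hrank.trans ((card_union_le _ _).trans (add_le_add card_image_le card_image_le))
  rw [card_powersetCardLE, card_univ, Fintype.card_fin] at hspan
  omega

/-- If `|A| > 2 · C(n, ≤ ⌊d/2⌋)` then the interpolation degree of the sumset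
`A + A ⊆ 𝔽₂ⁿ` is greater than `d`: some function on `A + A` cannot be computed on
`A + A` by any multilinear polynomial of total degree at most `d`. -/
theorem int_deg_sumset_gt (n d : ℕ) (hdn : d ≤ n) (A : Finset (Fin n → ZMod 2))
    (hA : A.card > 2 * ∑ i ∈ Finset.range (d / 2 + 1), n.choose i) :
    ∃ f : (Fin n → ZMod 2) → ZMod 2,
      ¬ ∃ P : MvPolynomial (Fin n) (ZMod 2),
          (∀ i, P.degreeOf i ≤ 1) ∧ P.totalDegree ≤ d ∧
          ∀ a ∈ A + A, MvPolynomial.eval a P = f a :=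
  int_deg_sumset_gt_general n d A hA
end

section
/- For every subset A ⊆ F_2^n, the interpolation degree of A is at most the VC dimension of A, i.e., int-deg(A) ≤ VC-dim(A) (where A is identified with a family of subsets of [n] via characteristic vectors). -/
open Finset

namespace IntDegAux


variable {n : ℕ}

/-- Binary encoding of a subset of `Fin n`. -/
def code (U : Finset (Fin n)) : ℕ := ∑ i ∈ U, 2 ^ (i : ℕ)

lemma sum_range_two_pow (N : ℕ) : ∑ j ∈ range N, 2 ^ j = 2 ^ N - 1 := by
  induction N with
  | zero => simp
  | succ N ih =>
    rw [Finset.sum_range_succ, ih, pow_succ]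
    have : 1 ≤ 2 ^ N := Nat.one_le_two_pow
    omega

lemma code_lt_of_ssubset {U S : Finset (Fin n)} (h : U ⊂ S) : code U < code S := by
  obtain ⟨i, hiS, hiU⟩ := exists_of_ssubset h
  exact Finset.sum_lt_sum_of_subset h.subset hiS hiU (by positivity)
    (fun _ _ _ => by positivity)

lemma code_ne {U V : Finset (Fin n)} {m : Fin n} (hmU : m ∈ U) (hmV : m ∉ V)
    (hmax : ∀ i, m < i → (i ∈ U ↔ i ∈ V)) : code U ≠ code V := by
  intro h
  have hfil : U.filter (fun i => m < i) = V.filter (fun i => m < i) := by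
    ext i
    simp only [mem_filter, and_congr_left_iff]
    intro hi
    exact hmax i hi
  have hsplit : ∀ W : Finset (Fin n),
      code W = ∑ i ∈ W.filter (fun i => m < i), 2 ^ (i : ℕ)
        + ∑ i ∈ W.filter (fun i => ¬ m < i), 2 ^ (i : ℕ) :=
    fun W => (Finset.sum_filter_add_sum_filter_not W _ _).symm
  have hcancel : ∑ i ∈ U.filter (fun i => ¬ m < i), 2 ^ (i : ℕ)
      = ∑ i ∈ V.filter (fun i => ¬ m < i), 2 ^ (i : ℕ) := by
    have := h
    rw [hsplit U, hsplit V, hfil] at this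
    omega
  have hL : 2 ^ (m : ℕ) ≤ ∑ i ∈ U.filter (fun i => ¬ m < i), 2 ^ (i : ℕ) :=
    Finset.single_le_sum (f := fun i : Fin n => 2 ^ (i : ℕ)) (fun i _ => Nat.zero_le _)
      (mem_filter.2 ⟨hmU, lt_irrefl m⟩)
  have hR : ∑ i ∈ V.filter (fun i => ¬ m < i), 2 ^ (i : ℕ) < 2 ^ (m : ℕ) := by
    have him : ∀ i ∈ V.filter (fun i => ¬ m < i), (i : ℕ) < (m : ℕ) := by
      intro i hi
      rw [mem_filter] at hi
      have : i ≠ m := fun h => hmV (h ▸ hi.1)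
      have : i < m := lt_of_le_of_ne (not_lt.1 hi.2) this
      exact this
    calc ∑ i ∈ V.filter (fun i => ¬ m < i), 2 ^ (i : ℕ)
        = ∑ j ∈ (V.filter (fun i => ¬ m < i)).image (Fin.val), 2 ^ j := by
          rw [Finset.sum_image (fun x _ y _ h => Fin.val_injective h)]
      _ ≤ ∑ j ∈ range (m : ℕ), 2 ^ j := by
          apply Finset.sum_le_sum_of_subset
          intro j hj
          rw [mem_image] at hj
          obtain ⟨i, hi, rfl⟩ := hj
          exact mem_range.2 (him i hi)
      _ = 2 ^ (m : ℕ) - 1 := sum_range_two_pow _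
      _ < 2 ^ (m : ℕ) := by
          have : 1 ≤ 2 ^ (m : ℕ) := Nat.one_le_two_pow
          omega
  omega

lemma code_inj : Function.Injective (code (n := n)) := by
  intro U V h
  by_contra hne
  have hsd : (symmDiff U V).Nonempty := by
    rw [Finset.nonempty_iff_ne_empty]
    intro he
    exact hne (symmDiff_eq_bot.1 he)
  set m := (symmDiff U V).max' hsd with hm
  have hmmem : m ∈ symmDiff U V := Finset.max'_mem _ hsd
  have hmax : ∀ i, m < i → (i ∈ U ↔ i ∈ V) := by
    intro i hi
    by_contra hiff
    have : i ∈ symmDiff U V := by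
      rw [Finset.mem_symmDiff]
      tauto
    exact absurd (Finset.le_max' _ i this) (not_le.2 hi)
  rw [Finset.mem_symmDiff] at hmmem
  rcases hmmem with ⟨h1, h2⟩ | ⟨h1, h2⟩
  · exact code_ne h1 h2 hmax h
  · exact code_ne h1 h2 (fun i hi => (hmax i hi).symm) h.symm

lemma sum_pow_code_le {Q : Finset (Finset (Fin n))} {N : ℕ} (h : ∀ U ∈ Q, code U < N) :
    ∑ U ∈ Q, 2 ^ code U ≤ 2 ^ N - 1 := by
  calc ∑ U ∈ Q, 2 ^ code U = ∑ c ∈ Q.image code, 2 ^ c := by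
        rw [Finset.sum_image (fun x _ y _ hxy => code_inj hxy)]
    _ ≤ ∑ c ∈ range N, 2 ^ c := by
        apply Finset.sum_le_sum_of_subset
        intro c hc
        rw [mem_image] at hc
        obtain ⟨U, hU, rfl⟩ := hc
        exact mem_range.2 (h U hU)
    _ = 2 ^ N - 1 := sum_range_two_pow _



variable {n : ℕ}

lemma zmod2_cases (x : ZMod 2) : x = 0 ∨ x = 1 := by revert x; decide

lemma zmod2_ne_one {x : ZMod 2} (h : x ≠ 1) : x = 0 := by
  rcases zmod2_cases x with h0 | h1
  · exact h0
  · exact absurd h1 h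

/-- The characteristic vector support of `a`. -/
def supp (a : Fin n → ZMod 2) : Finset (Fin n) := univ.filter fun i => a i = 1

lemma mem_supp {a : Fin n → ZMod 2} {i : Fin n} : i ∈ supp a ↔ a i = 1 := by
  simp [supp]

lemma supp_inj : Function.Injective (supp (n := n)) := by
  intro a b h
  funext i
  have : (i ∈ supp a) = (i ∈ supp b) := by rw [h]
  rw [eq_iff_iff, mem_supp, mem_supp] at this
  rcases zmod2_cases (a i) with ha | ha <;> rcases zmod2_cases (b i) with hb | hb <;>
    simp_all

/-- Key computation: the sum over the interval `[T, S]` of the monomial functions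
evaluated at `a` is the indicator of `supp a ∩ S = T`. -/
lemma sum_Icc_eval (T S : Finset (Fin n)) (hTS : T ⊆ S) (a : Fin n → ZMod 2) :
    ∑ U ∈ Finset.Icc T S, ∏ i ∈ U, a i
      = if supp a ∩ S = T then 1 else 0 := by
  have step1 : ∑ U ∈ Finset.Icc T S, ∏ i ∈ U, a i
      = (∏ i ∈ T, a i) * ∏ i ∈ S \ T, (a i + 1) := by
    rw [Finset.prod_add, Finset.mul_sum]
    apply Finset.sum_nbij' (i := fun U => U \ T) (j := fun V => T ∪ V)
    · intro U hU
      rw [Finset.mem_Icc] at hU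
      rw [mem_powerset]
      exact sdiff_subset_sdiff hU.2 le_rfl
    · intro V hV
      rw [mem_powerset] at hV
      rw [Finset.mem_Icc]
      constructor
      · exact subset_union_left
      · exact union_subset hTS (hV.trans sdiff_subset)
    · intro U hU
      rw [Finset.mem_Icc] at hU
      exact union_sdiff_of_subset hU.1
    · intro V hV
      rw [mem_powerset] at hV
      apply union_sdiff_cancel_left
      exact disjoint_of_subset_right hV sdiff_disjoint.symm
    · intro U hU
      rw [Finset.mem_Icc] at hU
      rw [Finset.prod_const_one, mul_one, ← Finset.prod_union (disjoint_sdiff)]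
      rw [union_sdiff_of_subset hU.1]
  rw [step1]
  by_cases h : supp a ∩ S = T
  · rw [if_pos h]
    have h1 : ∏ i ∈ T, a i = 1 := by
      apply Finset.prod_eq_one
      intro i hi
      have : i ∈ supp a ∩ S := h ▸ hi
      exact mem_supp.1 (mem_inter.1 this).1
    have h2 : ∏ i ∈ S \ T, (a i + 1) = 1 := by
      apply Finset.prod_eq_one
      intro i hi
      rw [mem_sdiff] at hi
      have hia : a i ≠ 1 := by
        intro hai
        exact hi.2 (h ▸ mem_inter.2 ⟨mem_supp.2 hai, hi.1⟩)
      rw [zmod2_ne_one hia, zero_add]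
    rw [h1, h2, mul_one]
  · rw [if_neg h]
    by_cases hT : ∀ i ∈ T, a i = 1
    · -- then T ⊆ supp a ∩ S, so strict: some i ∈ (supp a ∩ S) \ T
      have hsub : T ⊆ supp a ∩ S := fun i hi =>
        mem_inter.2 ⟨mem_supp.2 (hT i hi), hTS hi⟩
      obtain ⟨i, hi1, hi2⟩ := exists_of_ssubset (lt_of_le_of_ne hsub (Ne.symm h))
      rw [mem_inter] at hi1
      have : a i + 1 = 0 := by rw [mem_supp.1 hi1.1]; decide
      rw [Finset.prod_eq_zero (mem_sdiff.2 ⟨hi1.2, hi2⟩) this, mul_zero]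
    · push_neg at hT
      obtain ⟨i, hiT, hai⟩ := hT
      rw [Finset.prod_eq_zero hiT (zmod2_ne_one hai), zero_mul]


/-- Every function on the whole cube is a sum of monomial functions. -/
lemma exists_repr (f : (Fin n → ZMod 2) → ZMod 2) :
    ∃ 𝒮 : Finset (Finset (Fin n)), ∀ a, ∑ S ∈ 𝒮, ∏ i ∈ S, a i = f a := by
  classical
  set e : Finset (Fin n) → ((Fin n → ZMod 2) → ZMod 2) :=
    fun S a => ∏ i ∈ S, a i with he
  have hδ : ∀ b : Fin n → ZMod 2,
      (fun a => if a = b then (1 : ZMod 2) else 0)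
        ∈ Submodule.span (ZMod 2) (Set.range e) := by
    intro b
    have heq : (fun a => if a = b then (1 : ZMod 2) else 0)
        = ∑ U ∈ Finset.Icc (supp b) univ, e U := by
      funext a
      rw [Finset.sum_apply]
      have := sum_Icc_eval (supp b) univ (subset_univ _) a
      rw [inter_univ] at this
      rw [he]
      simp only []
      rw [this]
      congr 1
      simp only [eq_iff_iff]
      constructor
      · rintro rfl
        rfl
      · intro h
        exact supp_inj h
    rw [heq]
    exact Submodule.sum_mem _ fun U _ => Submodule.subset_span ⟨U, rfl⟩
  have hf : f ∈ Submodule.span (ZMod 2) (Set.range e) := by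
    have heq : f = ∑ b : Fin n → ZMod 2, f b • fun a => if a = b then (1 : ZMod 2) else 0 := by
      funext a
      rw [Finset.sum_apply]
      simp only [Pi.smul_apply, smul_eq_mul, mul_ite, mul_one, mul_zero]
      rw [Finset.sum_ite_eq (Finset.univ) a f]
      simp
    rw [heq]
    exact Submodule.sum_mem _ fun b _ => Submodule.smul_mem _ _ (hδ b)
  obtain ⟨c, hc⟩ := Submodule.mem_span_range_iff_exists_fun (ZMod 2) |>.1 hf
  refine ⟨univ.filter fun S => c S = 1, fun a => ?_⟩
  have := congrFun hc a
  rw [Finset.sum_apply] at this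
  rw [Finset.sum_filter]
  rw [← this]
  apply Finset.sum_congr rfl
  intro S _
  rcases zmod2_cases (c S) with h | h <;> simp [h, he]


end IntDegAux


open IntDegAux

/-- For `A ⊆ 𝔽₂ⁿ`, the interpolation degree of `A` is at most the VC dimension of
the family of subsets of `[n]` corresponding to `A` via characteristic vectors:
every function `f : A → 𝔽₂` is computed on `A` by some multilinear polynomial of
total degree at most `VC-dim(A)`. -/
theorem int_deg_le_vcDim (n : ℕ) (A : Finset (Fin n → ZMod 2))
    (f : (Fin n → ZMod 2) → ZMod 2) :
    ∃ P : MvPolynomial (Fin n) (ZMod 2),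
      (∀ i, P.degreeOf i ≤ 1) ∧
      P.totalDegree ≤ (A.image fun a => Finset.univ.filter fun i => a i = 1).vcDim ∧
      ∀ a ∈ A, MvPolynomial.eval a P = f a := by
  classical
  set B := A.image fun a => Finset.univ.filter fun i => a i = 1 with hB
  set Good : Finset (Finset (Fin n)) → Prop :=
    fun 𝒮 => ∀ a ∈ A, ∑ S ∈ 𝒮, ∏ i ∈ S, a i = f a with hGoodDef
  set μ : Finset (Finset (Fin n)) → ℕ := fun 𝒮 => ∑ S ∈ 𝒮, 2 ^ code S with hμDef
  obtain ⟨𝒮₀, h𝒮₀⟩ := exists_repr f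
  have hex : ∃ m, ∃ 𝒮, Good 𝒮 ∧ μ 𝒮 = m := ⟨μ 𝒮₀, 𝒮₀, fun a _ => h𝒮₀ a, rfl⟩
  obtain ⟨𝒮, hGood, hμ⟩ := Nat.find_spec hex
  have hmin : ∀ 𝒮', Good 𝒮' → μ 𝒮 ≤ μ 𝒮' := by
    intro 𝒮' h
    rw [hμ]
    exact Nat.find_le ⟨𝒮', h, rfl⟩
  -- every set in 𝒮 is shattered by B
  have hshat : ∀ S₀ ∈ 𝒮, B.Shatters S₀ := by
    intro S₀ hS₀
    by_contra hns
    rw [Finset.Shatters] at hns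
    push_neg at hns
    obtain ⟨T, hTS, hT⟩ := hns
    have hTA : ∀ a ∈ A, supp a ∩ S₀ ≠ T := by
      intro a ha h
      exact hT (supp a) (Finset.mem_image_of_mem _ ha) (by rw [inter_comm]; exact h)
    set 𝒬 := Finset.Icc T S₀ with h𝒬
    have hQ0 : ∀ a ∈ A, ∑ U ∈ 𝒬, ∏ i ∈ U, a i = 0 := by
      intro a ha
      rw [h𝒬, sum_Icc_eval T S₀ hTS a, if_neg (hTA a ha)]
    have hS₀Q : S₀ ∈ 𝒬 := Finset.mem_Icc.2 ⟨hTS, le_rfl⟩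
    set 𝒮' := (𝒮 \ 𝒬) ∪ (𝒬 \ 𝒮) with h𝒮'
    have hd : Disjoint (𝒮 \ 𝒬) (𝒬 \ 𝒮) := by
      rw [Finset.disjoint_left]
      intro x hx hx'
      rw [Finset.mem_sdiff] at hx hx'
      exact hx'.2 hx.1
    have hGood' : Good 𝒮' := by
      intro a ha
      have key : ∀ (𝒜 ℬ : Finset (Finset (Fin n))),
          ∑ U ∈ 𝒜 \ ℬ, ∏ i ∈ U, a i
            = ∑ U ∈ 𝒜, ∏ i ∈ U, a i - ∑ U ∈ 𝒜 ∩ ℬ, ∏ i ∈ U, a i := by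
        intro 𝒜 ℬ
        rw [← Finset.sdiff_inter_self_left]
        exact Finset.sum_sdiff_eq_sub Finset.inter_subset_left
      rw [h𝒮', Finset.sum_union hd, key 𝒮 𝒬, key 𝒬 𝒮, hGood a ha, hQ0 a ha,
        Finset.inter_comm 𝒬 𝒮]
      have h2 : ∀ x : ZMod 2, f a - x + (0 - x) = f a := by
        intro x
        have : x + x = 0 := by
          rcases zmod2_cases x with h | h <;> rw [h] <;> decide
        linear_combination -this
      exact h2 _
    have hlt : μ 𝒮' < μ 𝒮 := by
      have hsub1 : 𝒮 \ 𝒬 ⊆ 𝒮.erase S₀ := by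
        intro x hx
        rw [Finset.mem_sdiff] at hx
        exact Finset.mem_erase.2 ⟨fun h => hx.2 (h ▸ hS₀Q), hx.1⟩
      have hsub2 : 𝒬 \ 𝒮 ⊆ 𝒬.erase S₀ := by
        intro x hx
        rw [Finset.mem_sdiff] at hx
        exact Finset.mem_erase.2 ⟨fun h => hx.2 (h ▸ hS₀), hx.1⟩
      have h1 : μ (𝒮 \ 𝒬) + 2 ^ code S₀ ≤ μ 𝒮 := by
        have h₀ : 2 ^ code S₀ + ∑ S ∈ 𝒮.erase S₀, 2 ^ code S = ∑ S ∈ 𝒮, 2 ^ code S :=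
          Finset.add_sum_erase 𝒮 (fun S => 2 ^ code S) hS₀
        have hle : μ (𝒮 \ 𝒬) ≤ ∑ S ∈ 𝒮.erase S₀, 2 ^ code S :=
          Finset.sum_le_sum_of_subset hsub1
        have hμ𝒮 : μ 𝒮 = ∑ S ∈ 𝒮, 2 ^ code S := rfl
        omega
      have h2 : μ (𝒬 \ 𝒮) ≤ 2 ^ code S₀ - 1 := by
        have hle : μ (𝒬 \ 𝒮) ≤ ∑ S ∈ 𝒬.erase S₀, 2 ^ code S :=
          Finset.sum_le_sum_of_subset hsub2
        have hbound : ∑ S ∈ 𝒬.erase S₀, 2 ^ code S ≤ 2 ^ code S₀ - 1 := by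
          apply sum_pow_code_le
          intro U hU
          rw [Finset.mem_erase, h𝒬, Finset.mem_Icc] at hU
          exact code_lt_of_ssubset (lt_of_le_of_ne hU.2.2 hU.1)
        exact hle.trans hbound
      have h3 : 2 ^ code S₀ ≤ μ 𝒮 :=
        Finset.single_le_sum (f := fun S => 2 ^ code S) (fun _ _ => Nat.zero_le _) hS₀
      have h4 : 1 ≤ 2 ^ code S₀ := Nat.one_le_two_pow
      have h5 : μ 𝒮' = μ (𝒮 \ 𝒬) + μ (𝒬 \ 𝒮) := Finset.sum_union hd
      omega
    exact absurd (hmin 𝒮' hGood') (not_le.2 hlt)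
  -- build the polynomial
  refine ⟨∑ S ∈ 𝒮, ∏ i ∈ S, MvPolynomial.X i, ?_, ?_, ?_⟩
  · intro i
    apply le_trans (MvPolynomial.degreeOf_sum_le _ _ _)
    apply Finset.sup_le
    intro S _
    apply le_trans (MvPolynomial.degreeOf_prod_le _ _ _)
    calc ∑ j ∈ S, (MvPolynomial.X j : MvPolynomial (Fin n) (ZMod 2)).degreeOf i
        = ∑ j ∈ S, if i = j then 1 else 0 := by
          apply Finset.sum_congr rfl
          intro j _
          exact MvPolynomial.degreeOf_X i j
      _ = if i ∈ S then 1 else 0 := Finset.sum_ite_eq S i (fun _ => 1)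
      _ ≤ 1 := by split <;> omega
  · apply le_trans (MvPolynomial.totalDegree_finset_sum _ _)
    apply Finset.sup_le
    intro S hS
    calc (∏ i ∈ S, MvPolynomial.X i : MvPolynomial (Fin n) (ZMod 2)).totalDegree
        ≤ ∑ i ∈ S, (MvPolynomial.X i : MvPolynomial (Fin n) (ZMod 2)).totalDegree :=
          MvPolynomial.totalDegree_finset_prod _ _
      _ = S.card := by simp [MvPolynomial.totalDegree_X]
      _ ≤ B.vcDim := (hshat S hS).card_le_vcDim
  · intro a ha
    rw [map_sum]
    rw [← hGood a ha]
    apply Finset.sum_congr rfl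
    intro S _
    rw [map_prod]
    simp [MvPolynomial.eval_X]
end

section
/- Let p be a prime and let A ⊆ {0,1}^n ⊆ F_p^n. If |A| > p·|M_{⌊d/p⌋}(p, n)|, then int-deg_p(p·A) > d, where p·A = {a_1 + … + a_p : a_1,…,a_p ∈ A} is the p-fold sumset of A in F_p^n. -/
set_option linter.unusedSectionVars false
set_option maxHeartbeats 1000000

open Finset

namespace IntDegAux

section aux
variable {F : Type} [Field F] [DecidableEq F] {ι : Type} [Fintype ι] [DecidableEq ι]

def IndepAt {k : ℕ} (j : Fin k) (v : (Fin k → ι) → F) : Prop :=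
  ∀ g g' : Fin k → ι, (∀ m, m ≠ j → g m = g' m) → v g = v g'

lemma exists_mem_max_support (W : Submodule F (ι → F)) :
    ∃ h ∈ W, Module.finrank F W ≤ (Finset.univ.filter fun a => h a ≠ 0).card := by
  classical
  set N : Set ℕ := {k | ∃ h ∈ W, (Finset.univ.filter fun a => h a ≠ 0).card = k} with hN
  have hne : N.Nonempty := ⟨_, ⟨0, W.zero_mem, rfl⟩⟩
  have hbdd : BddAbove N := by
    refine ⟨Fintype.card ι, ?_⟩
    rintro k ⟨h, _, rfl⟩
    exact le_trans (Finset.card_le_card (Finset.filter_subset _ _)) (by simp)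
  obtain ⟨h, hhW, hcard⟩ := Nat.sSup_mem hne hbdd
  refine ⟨h, hhW, ?_⟩
  set S := Finset.univ.filter fun a => h a ≠ 0 with hS
  -- restriction map
  let φ : W →ₗ[F] (↥S → F) :=
    { toFun := fun w a => (w : ι → F) a
      map_add' := by intros; rfl
      map_smul' := by intros; rfl }
  have hinj : Function.Injective φ := by
    rw [injective_iff_map_eq_zero]
    rintro ⟨g, hgW⟩ hg0
    have hgS : ∀ a ∈ S, g a = 0 := fun a ha => congrFun hg0 ⟨a, ha⟩
    ext a
    by_contra hga
    -- h + g has strictly larger support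
    have hsub : S ⊂ Finset.univ.filter fun b => (h + g) b ≠ 0 := by
      constructor
      · intro b hb
        have : g b = 0 := hgS b hb
        simp only [Finset.mem_filter, Finset.mem_univ, true_and, Pi.add_apply, this, add_zero]
        exact (Finset.mem_filter.mp hb).2
      · intro hsup
        have haS : a ∉ S := by
          intro haS
          exact hga (hgS a haS)
        have hha : h a = 0 := by
          by_contra hha
          exact haS (Finset.mem_filter.mpr ⟨Finset.mem_univ _, hha⟩)
        have : a ∈ Finset.univ.filter fun b => (h + g) b ≠ 0 := by
          simp only [Finset.mem_filter, Finset.mem_univ, true_and, Pi.add_apply, hha, zero_add]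
          exact hga
        exact haS (hsup this)
    have hlt : S.card < (Finset.univ.filter fun b => (h + g) b ≠ 0).card :=
      Finset.card_lt_card hsub
    have hle : (Finset.univ.filter fun b => (h + g) b ≠ 0).card ≤ sSup N :=
      le_csSup hbdd ⟨h + g, W.add_mem hhW hgW, rfl⟩
    omega
  calc Module.finrank F W ≤ Module.finrank F (↥S → F) :=
        LinearMap.finrank_le_finrank_of_injective hinj
    _ = S.card := by simp [Module.finrank_fintype_fun_eq_card, Fintype.card_coe]


lemma slice_diag_base {γ : Type} [Fintype γ] [DecidableEq γ] (s : Finset γ)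
    (jm : γ → Fin 2) (u : γ → ι → F) (v : γ → (Fin 2 → ι) → F)
    (hv : ∀ c ∈ s, IndepAt (jm c) (v c))
    (D : Finset ι) (coef : ι → F) (hcoef : ∀ a ∈ D, coef a ≠ 0)
    (hT : ∀ g : Fin 2 → ι,
      (∑ c ∈ s, u c (g (jm c)) * v c g) =
        if (∀ m, g m = g 0) ∧ g 0 ∈ D then coef (g 0) else 0) :
    D.card ≤ s.card := by
  classical
  rcases isEmpty_or_nonempty ι with hι | hι
  · simp [Finset.eq_empty_of_isEmpty D]
  obtain ⟨a₀⟩ := hι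
  set w : γ → (ι → F) := fun c => if jm c = 0 then (fun b => v c ![a₀, b]) else u c with hw
  set Wsp := Submodule.span F (w '' ↑s) with hWsp
  -- rows
  have hrow : ∀ a ∈ D, (fun b => if b = a then coef a else 0) ∈ Wsp := by
    intro a haD
    set q : γ → F := fun c => if jm c = 0 then u c a else v c ![a, a₀] with hq
    have key : (fun b => if b = a then coef a else 0) =
        fun b => ∑ c ∈ s, q c * w c b := by
      funext b
      have h1 := hT ![a, b]
      have hcond : ((∀ m, (![a, b] : Fin 2 → ι) m = ![a, b] 0) ∧ (![a,b] : Fin 2 → ι) 0 ∈ D)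
          ↔ b = a := by
        simp [Fin.forall_fin_two, haD, eq_comm]
      rw [if_congr hcond rfl rfl] at h1
      rw [show ((![a,b] : Fin 2 → ι) 0) = a from rfl] at h1
      rw [← h1]
      refine Finset.sum_congr rfl ?_
      intro c hc
      by_cases hj : jm c = 0
      · have hvv : v c ![a, b] = v c ![a₀, b] := by
          refine hv c hc _ _ ?_
          intro m hm
          have : m = 1 := by omega
          subst this; rfl
        simp only [hq, hw, if_pos hj, hj, hvv]
        rw [show ((![a,b] : Fin 2 → ι) 0) = a from rfl]
      · have hj1 : jm c = 1 := by omega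
        have hvv : v c ![a, b] = v c ![a, a₀] := by
          refine hv c hc _ _ ?_
          intro m hm
          rw [hj1] at hm
          have : m = 0 := by omega
          subst this; rfl
        simp only [hq, hw, if_neg hj, hj1, hvv]
        rw [show ((![a,b] : Fin 2 → ι) 1) = b from rfl]
        ring
    rw [key]
    have h2 : (fun b => ∑ c ∈ s, q c * w c b) = ∑ c ∈ s, q c • w c := by
      funext b
      rw [Finset.sum_apply]
      rfl
    rw [h2]
    exact Submodule.sum_mem _ fun c hc =>
      Submodule.smul_mem _ _ (Submodule.subset_span ⟨c, hc, rfl⟩)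
  -- rows are linearly independent
  have hli : LinearIndependent F
      (fun a : ↥D => (fun b => if b = a then coef a else 0 : ι → F)) := by
    rw [Fintype.linearIndependent_iff]
    intro t ht a
    have h3 := congrFun ht (a : ι)
    simp only [Finset.sum_apply, Pi.smul_apply, smul_eq_mul] at h3
    rw [Finset.sum_eq_single a] at h3
    · simp only [if_pos rfl] at h3
      rcases mul_eq_zero.mp h3 with h | h
      · exact h
      · exact absurd h (hcoef a a.2)
    · intro b _ hba
      have : (a : ι) ≠ (b : ι) := fun hh => hba (Subtype.ext hh.symm)
      simp [this]
    · intro h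
      exact absurd (Finset.mem_univ a) h
  -- conclude
  have hli' : LinearIndependent F
      (fun a : ↥D => (⟨_, hrow a a.2⟩ : ↥Wsp)) := by
    apply LinearIndependent.of_comp Wsp.subtype
    exact hli
  have h1 : Fintype.card ↥D ≤ Module.finrank F ↥Wsp :=
    hli'.fintype_card_le_finrank
  have h2 : Module.finrank F ↥Wsp ≤ s.card := by
    refine le_trans (finrank_span_le_card _) ?_
    rw [Set.toFinset_image]
    exact le_trans (Finset.card_image_le) (by simp)
  simp only [Fintype.card_coe] at h1
  omega


lemma slice_diag_card_le (k' : ℕ) {γ : Type} [Fintype γ] [DecidableEq γ] (s : Finset γ)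
    (jm : γ → Fin (k' + 2)) (u : γ → ι → F) (v : γ → (Fin (k' + 2) → ι) → F)
    (hv : ∀ c ∈ s, IndepAt (jm c) (v c))
    (D : Finset ι) (coef : ι → F) (hcoef : ∀ a ∈ D, coef a ≠ 0)
    (hT : ∀ g : Fin (k' + 2) → ι,
      (∑ c ∈ s, u c (g (jm c)) * v c g) =
        if (∀ m, g m = g 0) ∧ g 0 ∈ D then coef (g 0) else 0) :
    D.card ≤ s.card := by
  classical
  induction k' generalizing s u D coef with
  | zero => exact slice_diag_base s jm u v hv D coef hcoef hT
  | succ k ih =>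
    rcases isEmpty_or_nonempty ι with hι | hι
    · simp [Finset.eq_empty_of_isEmpty D]
    set lst : Fin (k + 3) := Fin.last (k + 2) with hlst
    set S : Finset γ := s.filter (fun c => jm c = lst) with hSdef
    set s' : Finset γ := s.filter (fun c => ¬ jm c = lst) with hs'def
    -- constraint functionals
    let pair : γ → ((ι → F) →ₗ[F] F) := fun c =>
      { toFun := fun h => ∑ a, h a * u c a
        map_add' := fun x y => by simp [add_mul, Finset.sum_add_distrib]
        map_smul' := fun r x => by simp [Finset.mul_sum, mul_assoc] }
    let ℓ : (↥(Dᶜ) ⊕ ↥S) → ((ι → F) →ₗ[F] F) :=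
      Sum.elim (fun a => LinearMap.proj (a : ι)) (fun c => pair (c : γ))
    let Ψ : (ι → F) →ₗ[F] ((↥(Dᶜ) ⊕ ↥S) → F) := LinearMap.pi ℓ
    -- rank-nullity bound
    have hrank : Fintype.card ι ≤ Module.finrank F (LinearMap.ker Ψ) + ((Dᶜ).card + S.card) := by
      have h1 := LinearMap.finrank_range_add_finrank_ker Ψ
      have h2 : Module.finrank F (LinearMap.range Ψ) ≤ (Dᶜ).card + S.card := by
        refine le_trans (Submodule.finrank_le _) ?_
        rw [Module.finrank_fintype_fun_eq_card, Fintype.card_sum, Fintype.card_coe,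
          Fintype.card_coe]
      rw [Module.finrank_fintype_fun_eq_card] at h1
      omega
    obtain ⟨h, hhW, hhsupp⟩ := exists_mem_max_support (LinearMap.ker Ψ)
    have hconstr := LinearMap.mem_ker.mp hhW
    have hzeroD : ∀ a, a ∉ D → h a = 0 := fun a ha =>
      congrFun hconstr (Sum.inl ⟨a, Finset.mem_compl.mpr ha⟩)
    have hpair : ∀ c ∈ S, ∑ a, h a * u c a = 0 := fun c hc =>
      congrFun hconstr (Sum.inr ⟨c, hc⟩)
    set D' : Finset ι := Finset.univ.filter (fun a => h a ≠ 0) with hD'def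
    have hD'sub : D' ⊆ D := by
      intro a ha
      by_contra hna
      exact (Finset.mem_filter.mp ha).2 (hzeroD a hna)
    -- new slice data
    set jm' : γ → Fin (k + 2) := fun c =>
      if hc : jm c = lst then 0 else (jm c).castPred hc with hjm'def
    set v' : γ → ((Fin (k + 2) → ι) → F) := fun c g' => ∑ a, h a * v c (Fin.snoc g' a)
      with hv'def
    have hv' : ∀ c ∈ s', IndepAt (jm' c) (v' c) := by
      intro c hc g g' hg
      obtain ⟨hcs, hcl⟩ := Finset.mem_filter.mp hc
      refine Finset.sum_congr rfl fun a _ => ?_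
      congr 1
      refine hv c hcs _ _ ?_
      intro m hm
      rcases Fin.eq_castSucc_or_eq_last m with ⟨m', rfl⟩ | rfl
      · rw [Fin.snoc_castSucc, Fin.snoc_castSucc]
        refine hg m' ?_
        intro hm'
        apply hm
        rw [hjm'def] at hm'
        simp only [dif_neg hcl] at hm'
        rw [hm', Fin.castSucc_castPred]
      · rw [Fin.snoc_last, Fin.snoc_last]
    have h0cast : (0 : Fin (k + 3)) = Fin.castSucc (0 : Fin (k + 2)) := rfl
    have hT' : ∀ g' : Fin (k + 2) → ι,
        (∑ c ∈ s', u c (g' (jm' c)) * v' c g') =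
          if (∀ m, g' m = g' 0) ∧ g' 0 ∈ D' then (h (g' 0)) * coef (g' 0) else 0 := by
      intro g'
      have hsnoc0 : ∀ a : ι, (Fin.snoc g' a : Fin (k + 3) → ι) 0 = g' 0 := by
        intro a
        rw [h0cast, Fin.snoc_castSucc]
      -- split the full sum for each a
      have hsplit : ∀ a : ι, (∑ c ∈ s, u c ((Fin.snoc g' a : Fin (k+3) → ι) (jm c)) * v c (Fin.snoc g' a))
          = (∑ c ∈ S, u c a * v c (Fin.snoc g' (g' 0)))
            + ∑ c ∈ s', u c (g' (jm' c)) * v c (Fin.snoc g' a) := by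
        intro a
        rw [← Finset.sum_filter_add_sum_filter_not s (fun c => jm c = lst)]
        congr 1
        · refine Finset.sum_congr rfl fun c hc => ?_
          obtain ⟨hcs, hcl⟩ := Finset.mem_filter.mp hc
          rw [hcl, Fin.snoc_last]
          congr 1
          refine hv c hcs _ _ ?_
          intro m hm
          rw [hcl] at hm
          rcases Fin.eq_castSucc_or_eq_last m with ⟨m', rfl⟩ | rfl
          · rw [Fin.snoc_castSucc, Fin.snoc_castSucc]
          · exact absurd rfl hm
        · refine Finset.sum_congr rfl fun c hc => ?_
          obtain ⟨hcs, hcl⟩ := Finset.mem_filter.mp hc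
          congr 2
          have hcc : jm c = Fin.castSucc (jm' c) := by
            rw [hjm'def]
            simp only [dif_neg hcl]
            rw [Fin.castSucc_castPred]
          rw [hcc, Fin.snoc_castSucc]
      have key : (∑ a, h a * (∑ c ∈ s, u c ((Fin.snoc g' a : Fin (k+3) → ι) (jm c)) * v c (Fin.snoc g' a)))
          = ∑ c ∈ s', u c (g' (jm' c)) * v' c g' := by
        have e0 : (∑ a, h a * (∑ c ∈ s, u c ((Fin.snoc g' a : Fin (k+3) → ι) (jm c)) * v c (Fin.snoc g' a)))
            = (∑ a, h a * ∑ c ∈ S, u c a * v c (Fin.snoc g' (g' 0)))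
              + ∑ a, h a * ∑ c ∈ s', u c (g' (jm' c)) * v c (Fin.snoc g' a) := by
          rw [← Finset.sum_add_distrib]
          refine Finset.sum_congr rfl fun a _ => ?_
          rw [hsplit a, mul_add]
        have e1 : (∑ a, h a * ∑ c ∈ S, u c a * v c (Fin.snoc g' (g' 0))) = 0 := by
          have e1a : (∑ a, h a * ∑ c ∈ S, u c a * v c (Fin.snoc g' (g' 0)))
              = ∑ c ∈ S, (∑ a, h a * u c a) * v c (Fin.snoc g' (g' 0)) := by
            simp_rw [Finset.mul_sum]
            rw [Finset.sum_comm]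
            refine Finset.sum_congr rfl fun c _ => ?_
            rw [Finset.sum_mul]
            exact Finset.sum_congr rfl fun a _ => by ring
          rw [e1a]
          refine Finset.sum_eq_zero fun c hc => ?_
          rw [hpair c hc, zero_mul]
        have e2 : (∑ a, h a * ∑ c ∈ s', u c (g' (jm' c)) * v c (Fin.snoc g' a))
            = ∑ c ∈ s', u c (g' (jm' c)) * v' c g' := by
          simp_rw [Finset.mul_sum]
          rw [Finset.sum_comm]
          refine Finset.sum_congr rfl fun c _ => ?_
          rw [hv'def]
          simp only []
          rw [Finset.mul_sum]
          exact Finset.sum_congr rfl fun a _ => by ring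
        rw [e0, e1, e2, zero_add]
      rw [← key]
      -- now use hT on each snoc g' a
      have hdiag : ∀ a : ι, (∑ c ∈ s, u c ((Fin.snoc g' a : Fin (k+3) → ι) (jm c)) * v c (Fin.snoc g' a))
          = if ((∀ m, g' m = g' 0) ∧ a = g' 0) ∧ g' 0 ∈ D then coef (g' 0) else 0 := by
        intro a
        rw [hT (Fin.snoc g' a)]
        have hcond : ((∀ m, (Fin.snoc g' a : Fin (k+3) → ι) m = (Fin.snoc g' a : Fin (k+3) → ι) 0)
              ∧ (Fin.snoc g' a : Fin (k+3) → ι) 0 ∈ D)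
            ↔ (((∀ m, g' m = g' 0) ∧ a = g' 0) ∧ g' 0 ∈ D) := by
          rw [hsnoc0]
          constructor
          · rintro ⟨hall, hD⟩
            refine ⟨⟨fun m => ?_, ?_⟩, hD⟩
            · have := hall (Fin.castSucc m)
              rwa [Fin.snoc_castSucc] at this
            · have := hall (Fin.last _)
              rwa [Fin.snoc_last] at this
          · rintro ⟨⟨hall, ha⟩, hD⟩
            refine ⟨fun m => ?_, hD⟩
            rcases Fin.eq_castSucc_or_eq_last m with ⟨m', rfl⟩ | rfl
            · rw [Fin.snoc_castSucc]; exact hall m'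
            · rw [Fin.snoc_last]; exact ha
        rw [if_congr hcond rfl rfl, hsnoc0]
      simp_rw [hdiag]
      by_cases hcase : (∀ m, g' m = g' 0) ∧ g' 0 ∈ D
      · have hL : (∑ a, h a * if ((∀ m, g' m = g' 0) ∧ a = g' 0) ∧ g' 0 ∈ D
              then coef (g' 0) else 0)
            = h (g' 0) * coef (g' 0) := by
          rw [Finset.sum_eq_single (g' 0)]
          · simp [hcase.1, hcase.2]
          · intro b _ hb
            have : ¬ (((∀ m, g' m = g' 0) ∧ b = g' 0) ∧ g' 0 ∈ D) := by
              rintro ⟨⟨_, hbb⟩, _⟩; exact hb hbb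
            rw [if_neg this, mul_zero]
          · intro hnn; exact absurd (Finset.mem_univ _) hnn
        rw [hL]
        by_cases hz : h (g' 0) = 0
        · have : g' 0 ∉ D' := by
            rw [hD'def]
            simp [hz]
          rw [if_neg (by rintro ⟨_, hmem⟩; exact this hmem), hz, zero_mul]
        · have : g' 0 ∈ D' := by
            rw [hD'def]
            simp [hz]
          rw [if_pos ⟨hcase.1, this⟩]
      · have hR : ¬ ((∀ m, g' m = g' 0) ∧ g' 0 ∈ D') := by
          rintro ⟨hall, hmem⟩
          exact hcase ⟨hall, hD'sub hmem⟩
        rw [if_neg hR]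
        refine Finset.sum_eq_zero fun a _ => ?_
        have : ¬ (((∀ m, g' m = g' 0) ∧ a = g' 0) ∧ g' 0 ∈ D) := by
          rintro ⟨⟨hall, _⟩, hmem⟩
          exact hcase ⟨hall, hmem⟩
        rw [if_neg this, mul_zero]
    -- apply the induction hypothesis
    have hIH := ih s' jm' u v' hv' D' (fun a => h a * coef a)
      (by
        intro a ha
        have h1 : h a ≠ 0 := (Finset.mem_filter.mp ha).2
        have h2 : coef a ≠ 0 := hcoef a (hD'sub ha)
        exact mul_ne_zero h1 h2)
      hT'
    -- put the counting together
    have hcards : S.card + s'.card = s.card := by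
      rw [hSdef, hs'def]
      exact Finset.card_filter_add_card_filter_not _
    have hcompl : (Dᶜ).card = Fintype.card ι - D.card := Finset.card_compl D
    have hDle : D.card ≤ Fintype.card ι := Finset.card_le_univ D
    omega

end aux

section expand
variable {F : Type} [Field F] {ι : Type} [Fintype ι] {n q : ℕ}

lemma prod_pow_update_succ {M : Type} [CommMonoid M] (A : Fin n → M) (e : Fin n → ℕ)
    (i₀ : Fin n) :
    ∏ i, A i ^ (Function.update e i₀ (e i₀ + 1)) i = A i₀ * ∏ i, A i ^ e i := by
  classical
  have h : (fun i => A i ^ (Function.update e i₀ (e i₀ + 1)) i)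
      = Function.update (fun i => A i ^ e i) i₀ (A i₀ ^ (e i₀ + 1)) := by
    funext i
    by_cases hi : i = i₀
    · subst hi; simp
    · simp [Function.update_of_ne hi]
  rw [h, Finset.prod_update_of_mem (Finset.mem_univ i₀)]
  rw [← Finset.mul_prod_erase Finset.univ (fun i => A i ^ e i) (Finset.mem_univ i₀)]
  rw [pow_succ]
  simp only [Finset.erase_eq]
  rw [mul_comm (A i₀ ^ e i₀) (A i₀), mul_assoc]

def monoF (B : ι → Fin n → F) (e : Fin n → ℕ) : ι → F := fun a => ∏ i, B a i ^ e i

def phiF (B : ι → Fin n → F) (Emat : Fin q → Fin n → ℕ) : (Fin q → ι) → F :=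
  fun g => ∏ j, monoF B (Emat j) (g j)

lemma expand_mem_span (B : ι → Fin n → F) (e : Fin n → ℕ) :
    (fun g : Fin q → ι => ∏ i, (∑ j, B (g j) i) ^ e i) ∈
      Submodule.span F {Φ : (Fin q → ι) → F | ∃ Emat : Fin q → Fin n → ℕ,
        (∀ i, ∑ j, Emat j i = e i) ∧ Φ = phiF B Emat} := by
  classical
  suffices H : ∀ (N : ℕ) (e : Fin n → ℕ), ∑ i, e i = N →
      (fun g : Fin q → ι => ∏ i, (∑ j, B (g j) i) ^ e i) ∈
      Submodule.span F {Φ : (Fin q → ι) → F | ∃ Emat : Fin q → Fin n → ℕ,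
        (∀ i, ∑ j, Emat j i = e i) ∧ Φ = phiF B Emat} by
    exact H _ e rfl
  intro N
  induction N with
  | zero =>
    intro e he
    have h0 : ∀ i, e i = 0 := by
      intro i
      exact Finset.sum_eq_zero_iff.mp he i (Finset.mem_univ i)
    have heq : (fun g : Fin q → ι => ∏ i, (∑ j, B (g j) i) ^ e i)
        = phiF B (fun _ _ => 0) := by
      funext g
      simp [phiF, monoF, h0]
    rw [heq]
    exact Submodule.subset_span ⟨fun _ _ => 0, fun i => by simp [h0 i], rfl⟩
  | succ N ih =>
    intro e he
    obtain ⟨i₀, _, hi₀⟩ : ∃ i ∈ Finset.univ, e i ≠ 0 := by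
      apply Finset.exists_ne_zero_of_sum_ne_zero
      omega
    set e' : Fin n → ℕ := Function.update e i₀ (e i₀ - 1) with he'def
    have hee : e = Function.update e' i₀ (e' i₀ + 1) := by
      funext i
      by_cases hi : i = i₀
      · subst hi; simp [he'def]; omega
      · simp [he'def, Function.update_of_ne hi]
    have hsum' : ∑ i, e' i = N := by
      have h1 : ∑ i, e' i = (e i₀ - 1) + ∑ i ∈ Finset.univ.erase i₀, e i := by
        rw [he'def, Finset.sum_update_of_mem (Finset.mem_univ i₀)]
        simp only [Finset.erase_eq]
      have h2 : e i₀ + ∑ i ∈ Finset.univ.erase i₀, e i = N + 1 := by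
        rw [Finset.add_sum_erase Finset.univ e (Finset.mem_univ i₀), he]
      omega
    have IH := ih e' hsum'
    -- multiplication by the coordinate-sum function is linear
    set Mmul : ((Fin q → ι) → F) →ₗ[F] ((Fin q → ι) → F) :=
      { toFun := fun v g => (∑ j, B (g j) i₀) * v g
        map_add' := fun x y => by funext g; simp [mul_add]
        map_smul' := fun r x => by
          funext g; simp only [Pi.smul_apply, smul_eq_mul, RingHom.id_apply]; ring }
      with hMmul
    have hFe : (fun g : Fin q → ι => ∏ i, (∑ j, B (g j) i) ^ e i)
        = Mmul (fun g : Fin q → ι => ∏ i, (∑ j, B (g j) i) ^ e' i) := by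
      funext g
      conv_lhs => rw [hee]
      exact prod_pow_update_succ (fun i => ∑ j, B (g j) i) e' i₀
    rw [hFe]
    have hmm : Mmul (fun g : Fin q → ι => ∏ i, (∑ j, B (g j) i) ^ e' i)
        ∈ Submodule.map Mmul (Submodule.span F {Φ : (Fin q → ι) → F |
            ∃ Emat : Fin q → Fin n → ℕ, (∀ i, ∑ j, Emat j i = e' i) ∧ Φ = phiF B Emat}) :=
      Submodule.mem_map_of_mem IH
    rw [Submodule.map_span] at hmm
    refine Submodule.span_le.mpr ?_ hmm
    rintro Φ ⟨Φ', ⟨Emat, hcols, rfl⟩, rfl⟩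
    have hsum_mmul : Mmul (phiF B Emat) = ∑ j₁ : Fin q,
        phiF B (Function.update Emat j₁
          (Function.update (Emat j₁) i₀ (Emat j₁ i₀ + 1))) := by
      funext g
      rw [Finset.sum_apply]
      show (∑ j, B (g j) i₀) * phiF B Emat g = _
      rw [Finset.sum_mul]
      refine Finset.sum_congr rfl fun j₁ _ => ?_
      set E₁ : Fin n → ℕ := Function.update (Emat j₁) i₀ (Emat j₁ i₀ + 1) with hE₁
      have hfun : (fun j => monoF B ((Function.update Emat j₁ E₁) j) (g j))
          = Function.update (fun j => monoF B (Emat j) (g j)) j₁ (monoF B E₁ (g j₁)) := by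
        funext j
        by_cases hj : j = j₁
        · subst hj; simp
        · simp [Function.update_of_ne hj]
      have hmono : monoF B E₁ (g j₁) = B (g j₁) i₀ * monoF B (Emat j₁) (g j₁) := by
        rw [hE₁]
        exact prod_pow_update_succ (fun i => B (g j₁) i) (Emat j₁) i₀
      calc B (g j₁) i₀ * phiF B Emat g
          = B (g j₁) i₀ * (monoF B (Emat j₁) (g j₁)
              * ∏ j ∈ Finset.univ.erase j₁, monoF B (Emat j) (g j)) := by
            rw [phiF, ← Finset.mul_prod_erase Finset.univ
              (fun j => monoF B (Emat j) (g j)) (Finset.mem_univ j₁)]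
        _ = monoF B E₁ (g j₁) * ∏ j ∈ Finset.univ.erase j₁, monoF B (Emat j) (g j) := by
            rw [hmono, mul_assoc]
        _ = ∏ j, Function.update (fun j => monoF B (Emat j) (g j)) j₁
              (monoF B E₁ (g j₁)) j := by
            rw [Finset.prod_update_of_mem (Finset.mem_univ j₁)]
            simp only [Finset.erase_eq]
        _ = phiF B (Function.update Emat j₁ E₁) g := by
            rw [phiF, hfun]
    rw [hsum_mmul]
    refine Submodule.sum_mem _ fun j₁ _ => Submodule.subset_span ⟨_, ?_, rfl⟩
    intro i
    have hupd : ∀ j, Function.update Emat j₁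
          (Function.update (Emat j₁) i₀ (Emat j₁ i₀ + 1)) j i
        = Function.update (fun j => Emat j i) j₁
            ((Function.update (Emat j₁) i₀ (Emat j₁ i₀ + 1)) i) j := by
      intro j
      by_cases hj : j = j₁
      · subst hj; simp
      · simp [Function.update_of_ne hj]
    rw [Finset.sum_congr rfl fun j _ => hupd j]
    rw [Finset.sum_update_of_mem (Finset.mem_univ j₁)]
    have hcb : Emat j₁ i + ∑ j ∈ Finset.univ.erase j₁, Emat j i = e' i := by
      rw [Finset.add_sum_erase Finset.univ (fun j => Emat j i) (Finset.mem_univ j₁)]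
      exact hcols i
    simp only [Finset.erase_eq] at hcb
    have hei : e i = Function.update e' i₀ (e' i₀ + 1) i := by rw [← hee]
    by_cases hi : i = i₀
    · subst hi
      simp only [Function.update_self] at hei ⊢
      omega
    · simp only [Function.update_of_ne hi] at hei ⊢
      omega
end expand

def indepSub {F : Type} [Field F] {ι : Type} {k : ℕ} (j : Fin k) :
    Submodule F ((Fin k → ι) → F) where
  carrier := {v | IndepAt j v}
  add_mem' := fun hx hy g g' hgg => by
    simp only [Pi.add_apply, hx g g' hgg, hy g g' hgg]
  zero_mem' := fun g g' _ => rfl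
  smul_mem' := fun r v hv g g' hgg => by
    simp only [Pi.smul_apply, hv g g' hgg]

def mulMap {F : Type} [Field F] {ι : Type} {k : ℕ} (j : Fin k) (u : ι → F) :
    ((Fin k → ι) → F) →ₗ[F] ((Fin k → ι) → F) where
  toFun := fun v g => u (g j) * v g
  map_add' := fun x y => by funext g; simp [mul_add]
  map_smul' := fun r x => by
    funext g; simp only [Pi.smul_apply, smul_eq_mul, RingHom.id_apply]; ring

end IntDegAux

open IntDegAux in
/-- Let `p` be a prime and `A ⊆ {0,1}ⁿ ⊆ 𝔽ₚⁿ`.  If `|A| > p · |M_{⌊d/p⌋}(p, n)|`,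
where `M_k(p, n)` is the set of monomials with individual degrees at most `p - 1` and
total degree at most `k`, then the interpolation degree over `𝔽ₚ` of the `p`-fold
sumset `p·A = {a₁ + ⋯ + a_p : aᵢ ∈ A}` is greater than `d`: some function on `p·A`
cannot be computed on `p·A` by any `p`-reduced polynomial of total degree at most `d`. -/
theorem int_deg_p_fold_sumset_gt (p n d : ℕ) (hp : p.Prime)
    (A : Finset (Fin n → ZMod p)) (hA01 : ∀ a ∈ A, ∀ i, a i = 0 ∨ a i = 1)
    (hA : A.card > p * (Finset.univ.filter
        fun e : Fin n → Fin p => ∑ i, (e i : ℕ) ≤ d / p).card) :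
    ∃ f : (Fin n → ZMod p) → ZMod p,
      ¬ ∃ P : MvPolynomial (Fin n) (ZMod p),
          (∀ i, P.degreeOf i ≤ p - 1) ∧ P.totalDegree ≤ d ∧
          ∀ x : Fin n → ZMod p,
            (∃ g : Fin p → (Fin n → ZMod p), (∀ j, g j ∈ A) ∧ x = ∑ j, g j) →
            MvPolynomial.eval x P = f x := by
  classical
  haveI hfact : Fact p.Prime := ⟨hp⟩
  have hp2 : 2 ≤ p := hp.two_le
  obtain ⟨k', hk'⟩ := Nat.exists_eq_add_of_le' hp2
  subst hk'
  refine ⟨fun x => if x = 0 then 1 else 0, ?_⟩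
  rintro ⟨P, hdeg, htot, hP⟩
  set ι : Type := {x // x ∈ A} with hι
  set B : ι → Fin n → ZMod (k' + 2) := fun a i => (a : Fin n → ZMod (k' + 2)) i with hB
  set E : Finset (Fin n → Fin (k' + 2)) := Finset.univ.filter
    (fun e : Fin n → Fin (k' + 2) => ∑ i, (e i : ℕ) ≤ d / (k' + 2)) with hEdef
  set γ : Type := Fin (k' + 2) × {e // e ∈ E} with hγ
  set uF : γ → ι → ZMod (k' + 2) :=
    fun c => monoF B (fun i => ((c.2.1 : Fin n → Fin (k' + 2)) i : ℕ)) with huF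
  set W : Submodule (ZMod (k' + 2)) ((Fin (k' + 2) → ι) → ZMod (k' + 2)) :=
    ⨆ c : γ, Submodule.map (mulMap c.1 (uF c)) (indepSub c.1) with hW
  set T : (Fin (k' + 2) → ι) → ZMod (k' + 2) :=
    fun g => MvPolynomial.eval (∑ j, B (g j)) P with hT
  have hval01 : ∀ (a : ι) (i : Fin n), B a i = 0 ∨ B a i = 1 :=
    fun a i => hA01 (a : Fin n → ZMod (k' + 2)) a.2 i
  -- Step 1 : T ∈ W
  have hTW : T ∈ W := by
    have hTsum : T = ∑ m ∈ P.support, (MvPolynomial.coeff m P) •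
        (fun g : Fin (k' + 2) → ι => ∏ i, (∑ j, B (g j) i) ^ m i) := by
      funext g
      rw [Finset.sum_apply]
      show MvPolynomial.eval (∑ j, B (g j)) P = _
      rw [MvPolynomial.eval_eq']
      refine Finset.sum_congr rfl fun m _ => ?_
      simp only [Pi.smul_apply, smul_eq_mul]
      congr 1
      refine Finset.prod_congr rfl fun i _ => ?_
      congr 1
      rw [Finset.sum_apply]
    rw [hTsum]
    refine Submodule.sum_mem _ fun m hm => Submodule.smul_mem _ _ ?_
    refine Submodule.span_le.mpr ?_ (expand_mem_span (q := k' + 2) B (fun i => m i))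
    rintro Φ ⟨Emat, hcols, rfl⟩
    have hmd : ∑ i, m i ≤ d := by
      have h1 : m.sum (fun _ e => e) ≤ P.totalDegree := MvPolynomial.le_totalDegree hm
      have h2 : m.sum (fun _ e => e) = ∑ i, m i := Finsupp.sum_fintype _ _ (fun _ => rfl)
      omega
    have hmp : ∀ i, m i ≤ k' + 1 := fun i =>
      le_trans (MvPolynomial.monomial_le_degreeOf i hm) (hdeg i)
    have hEd : ∑ j : Fin (k' + 2), ∑ i, Emat j i ≤ d := by
      rw [Finset.sum_comm]
      calc ∑ i, ∑ j : Fin (k' + 2), Emat j i = ∑ i, m i :=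
            Finset.sum_congr rfl fun i _ => hcols i
        _ ≤ d := hmd
    obtain ⟨j₀, hj₀⟩ : ∃ j₀ : Fin (k' + 2), ∑ i, Emat j₀ i ≤ d / (k' + 2) := by
      by_contra hno
      push_neg at hno
      have h3 : ∑ _j : Fin (k' + 2), (d / (k' + 2) + 1) ≤ ∑ j : Fin (k' + 2), ∑ i, Emat j i :=
        Finset.sum_le_sum fun j _ => hno j
      rw [Finset.sum_const, Finset.card_univ, Fintype.card_fin, smul_eq_mul] at h3
      have hdm := Nat.div_add_mod d (k' + 2)
      have hml : d % (k' + 2) < k' + 2 := Nat.mod_lt _ (by omega)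
      have hexp : (k' + 2) * (d / (k' + 2) + 1)
          = (k' + 2) * (d / (k' + 2)) + (k' + 2) := by ring
      omega
    have hcolle : ∀ i, Emat j₀ i ≤ m i := fun i => by
      rw [← hcols i]
      exact Finset.single_le_sum (f := fun j => Emat j i)
        (fun _ _ => Nat.zero_le _) (Finset.mem_univ j₀)
    set eF : Fin n → Fin (k' + 2) := fun i => ⟨Emat j₀ i, by
      have h1 := hcolle i; have h2 := hmp i; omega⟩ with heF
    have heFE : eF ∈ E := by
      rw [hEdef, Finset.mem_filter]
      exact ⟨Finset.mem_univ _, by simpa [heF] using hj₀⟩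
    have hmem : phiF B Emat ∈ Submodule.map (mulMap j₀ (monoF B (Emat j₀)))
        (indepSub (F := ZMod (k' + 2)) (ι := ι) j₀) := by
      refine ⟨fun g => ∏ j ∈ Finset.univ.erase j₀, monoF B (Emat j) (g j), ?_, ?_⟩
      · intro g g' hgg
        refine Finset.prod_congr rfl fun j hj => ?_
        rw [hgg j (Finset.ne_of_mem_erase hj)]
      · funext g
        show monoF B (Emat j₀) (g j₀)
            * ∏ j ∈ Finset.univ.erase j₀, monoF B (Emat j) (g j) = phiF B Emat g
        rw [phiF, Finset.mul_prod_erase Finset.univ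
          (fun j => monoF B (Emat j) (g j)) (Finset.mem_univ j₀)]
    have hueq : uF (⟨j₀, ⟨eF, heFE⟩⟩ : γ) = monoF B (Emat j₀) := rfl
    refine (le_iSup (fun c : γ => Submodule.map (mulMap c.1 (uF c)) (indepSub c.1))
      (⟨j₀, ⟨eF, heFE⟩⟩ : γ)) ?_
    rw [hueq]
    exact hmem
  -- Step 2 : decomposition
  rw [hW, Submodule.mem_iSup_iff_exists_finsupp] at hTW
  obtain ⟨fdec, hfmem, hfsum⟩ := hTW
  choose vv hvvmem hvveq using fun c => Submodule.mem_map.mp (hfmem c)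
  -- Step 3 : diagonal identity
  have hdiagiff : ∀ g : Fin (k' + 2) → ι, (∑ j, B (g j)) = 0 ↔ ∀ mm, g mm = g 0 := by
    intro g
    constructor
    · intro h0 mm
      have hcoord : ∀ i, B (g mm) i = B (g 0) i := by
        intro i
        have hsum : ∑ j, B (g j) i = 0 := by
          have := congrFun h0 i
          rwa [Finset.sum_apply] at this
        set cnt := (Finset.univ.filter fun j : Fin (k' + 2) => B (g j) i = 1).card with hcnt
        have hbool : ∑ j, B (g j) i = (cnt : ZMod (k' + 2)) := by
          rw [hcnt, ← Finset.sum_boole]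
          refine Finset.sum_congr rfl fun j _ => ?_
          rcases hval01 (g j) i with hv0 | hv1
          · rw [hv0, if_neg (show ¬(0 : ZMod (k' + 2)) = 1 from
              fun hh => one_ne_zero hh.symm)]
          · rw [hv1, if_pos rfl]
        have hdvd : (k' + 2) ∣ cnt := by
          rw [hbool] at hsum
          exact (ZMod.natCast_eq_zero_iff cnt (k' + 2)).mp hsum
        have hcle : cnt ≤ k' + 2 := le_trans (Finset.card_filter_le _ _)
          (by rw [Finset.card_univ, Fintype.card_fin])
        have hor : cnt = 0 ∨ cnt = k' + 2 := by
          rcases hdvd with ⟨t, ht⟩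
          rcases t with _ | t
          · left; omega
          · rcases t with _ | t
            · right; omega
            · exfalso; nlinarith
        rcases hor with hc0 | hcp
        · have hemp : (Finset.univ.filter fun j : Fin (k' + 2) => B (g j) i = 1) = ∅ :=
            Finset.card_eq_zero.mp (hcnt.symm.trans hc0)
          have hne1 : ∀ j : Fin (k' + 2), B (g j) i ≠ 1 := by
            intro j hj
            have hjf : j ∈ Finset.univ.filter fun j : Fin (k' + 2) => B (g j) i = 1 :=
              Finset.mem_filter.mpr ⟨Finset.mem_univ _, hj⟩
            rw [hemp] at hjf
            exact absurd hjf (Finset.notMem_empty j)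
          have hz : ∀ j : Fin (k' + 2), B (g j) i = 0 :=
            fun j => (hval01 (g j) i).resolve_right (hne1 j)
          rw [hz mm, hz 0]
        · have hful : (Finset.univ.filter fun j : Fin (k' + 2) => B (g j) i = 1)
              = Finset.univ := by
            apply Finset.eq_univ_of_card
            rw [← hcnt, hcp, Fintype.card_fin]
          have ho : ∀ j : Fin (k' + 2), B (g j) i = 1 := by
            intro j
            have hju := Finset.mem_univ j
            rw [← hful] at hju
            exact (Finset.mem_filter.mp hju).2
          rw [ho mm, ho 0]
      apply Subtype.ext
      funext i
      exact hcoord i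
    · intro hall
      have hcst : ∀ j : Fin (k' + 2), B (g j) = B (g 0) := fun j => by rw [hall j]
      calc ∑ j, B (g j) = ∑ _j : Fin (k' + 2), B (g 0) :=
            Finset.sum_congr rfl fun j _ => hcst j
        _ = ((k' + 2 : ℕ)) • B (g 0) := by
            rw [Finset.sum_const, Finset.card_univ, Fintype.card_fin]
        _ = 0 := by
            funext i
            rw [Pi.smul_apply, Pi.zero_apply, nsmul_eq_mul, ZMod.natCast_self, zero_mul]
  -- Step 4 : apply the slice rank bound
  have hfinal : (Finset.univ : Finset ι).card ≤ (Finset.univ : Finset γ).card := by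
    refine slice_diag_card_le k' (Finset.univ : Finset γ)
      (fun c => c.1) uF vv (fun c _ => hvvmem c)
      Finset.univ (fun _ => 1) (fun a _ => one_ne_zero) ?_
    intro g
    calc ∑ c ∈ Finset.univ, uF c (g c.1) * vv c g
        = ∑ c, fdec c g := Finset.sum_congr rfl fun c _ => congrFun (hvveq c) g
      _ = (∑ c, fdec c) g := by rw [Finset.sum_apply]
      _ = T g := by
          rw [← hfsum, Finsupp.sum_fintype]
          exact fun _ => rfl
      _ = if (∀ mm, g mm = g 0) ∧ g 0 ∈ (Finset.univ : Finset ι)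
            then (1 : ZMod (k' + 2)) else 0 := by
          have hx := hP (∑ j, B (g j))
            ⟨fun j => (g j : Fin n → ZMod (k' + 2)), fun j => (g j).2, rfl⟩
          refine hx.trans ?_
          show (if (∑ j, B (g j)) = 0 then (1 : ZMod (k' + 2)) else 0) = _
          refine if_congr ?_ rfl rfl
          rw [hdiagiff g]
          simp
  have hcard1 : (Finset.univ : Finset ι).card = A.card := by
    rw [Finset.card_univ]
    exact Fintype.card_coe A
  have hcard2 : (Finset.univ : Finset γ).card = (k' + 2) * E.card := by
    rw [Finset.card_univ]
    have h1 : Fintype.card γ = Fintype.card (Fin (k' + 2)) * Fintype.card {e // e ∈ E} :=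
      Fintype.card_prod _ _
    rw [h1, Fintype.card_fin]
    congr 1
    exact Fintype.card_coe E
  rw [hcard1, hcard2] at hfinal
  omega
end

section
/- Let p be a prime and let f : F_p^n → F_p be a function of degree at most d (i.e., its unique p-reduced polynomial representation has total degree at most d). Then the p-fold tensor T : (F_p^n)^p → F_p defined by T(X^1,…,X^p) = f(X^1 + … + X^p) has slice rank at most p·|M_{⌊d/p⌋}(p, n)|. -/
/-- `SliceRankLE k R T` means that the `k`-fold tensor `T : (Fin k → I) → F` has slice
rank at most `R`: it is a sum of `R` tensors, each of which factors as a function of a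
single coordinate times a function of the remaining coordinates. -/
def SliceRankLE {I : Type*} {F : Type*} [Field F] (k R : ℕ)
    (T : (Fin k → I) → F) : Prop :=
  ∃ (l : Fin R → Fin k) (a : Fin R → I → F) (b : Fin R → (Fin k → I) → F),
    (∀ i : Fin R, ∀ g g' : Fin k → I, (∀ j, j ≠ l i → g j = g' j) → b i g = b i g') ∧
    ∀ g : Fin k → I, T g = ∑ i : Fin R, a i (g (l i)) * b i g

/-- (Generalized Croot–Lev–Pach.)  If `f : 𝔽ₚⁿ → 𝔽ₚ` is computed by a `p`-reduced
polynomial of total degree at most `d`, then the `p`-fold tensor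
`T(X¹, …, Xᵖ) = f(X¹ + ⋯ + Xᵖ)` has slice rank at most `p · |M_{⌊d/p⌋}(p, n)|`,
where `M_k(p, n)` is the set of monomials with individual degrees at most `p - 1`
and total degree at most `k`. -/
theorem slice_rank_of_low_degree (p n d : ℕ) [hp : Fact p.Prime]
    (f : (Fin n → ZMod p) → ZMod p)
    (P : MvPolynomial (Fin n) (ZMod p))
    (hPred : ∀ i, P.degreeOf i ≤ p - 1) (hPd : P.totalDegree ≤ d)
    (hPf : ∀ x, MvPolynomial.eval x P = f x) :
    SliceRankLE p
      (p * (Finset.univ.filter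
        fun e : Fin n → Fin p => ∑ i, (e i : ℕ) ≤ d / p).card)
      (fun g : Fin p → (Fin n → ZMod p) => f (∑ j, g j)) := by
  classical
  have hp0 : 0 < p := hp.out.pos
  set S : Fin n → MvPolynomial (Fin p × Fin n) (ZMod p) :=
    fun i => ∑ j : Fin p, MvPolynomial.X (j, i) with hS
  set Q : MvPolynomial (Fin p × Fin n) (ZMod p) := MvPolynomial.bind₁ S P with hQdef
  have hQ : Q = ∑ u ∈ P.support,
      (MvPolynomial.C (MvPolynomial.coeff u P) * ∏ i ∈ u.support, S i ^ u i) := by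
    conv_lhs => rw [hQdef, P.as_sum, map_sum]
    exact Finset.sum_congr rfl fun u _ => MvPolynomial.bind₁_monomial _ _ _
  -- structure of the support of Q
  have hsupp : ∀ E ∈ Q.support, ∃ u ∈ P.support, ∀ i, ∑ j : Fin p, E (j, i) = u i := by
    intro E hE
    rw [hQ] at hE
    obtain ⟨u, hu, hEu⟩ := Finset.mem_biUnion.mp (MvPolynomial.support_sum hE)
    refine ⟨u, hu, fun i₀ => ?_⟩
    set w : Fin p × Fin n → ℕ := fun v => if v.2 = i₀ then 1 else 0 with hw
    have hhom : MvPolynomial.IsWeightedHomogeneous w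
        (MvPolynomial.C (MvPolynomial.coeff u P) * ∏ i ∈ u.support, S i ^ u i) (u i₀) := by
      have h2 : MvPolynomial.IsWeightedHomogeneous w (∏ i ∈ u.support, S i ^ u i)
          (∑ i ∈ u.support, u i * (if i = i₀ then 1 else 0)) := by
        refine MvPolynomial.IsWeightedHomogeneous.prod _ _ _ fun i _ => ?_
        have hSi : MvPolynomial.IsWeightedHomogeneous w (S i) (if i = i₀ then 1 else 0) := by
          refine MvPolynomial.IsWeightedHomogeneous.sum _ _ _ fun j _ => ?_
          simpa [hw] using MvPolynomial.isWeightedHomogeneous_X (R := ZMod p) w (j, i)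
        have hpow : S i ^ u i = ∏ _k ∈ Finset.range (u i), S i := by
          simp
        rw [hpow]
        have := MvPolynomial.IsWeightedHomogeneous.prod (Finset.range (u i)) (fun _ => S i)
          (fun _ => (if i = i₀ then 1 else 0)) (w := w) fun _ _ => hSi
        simpa [Finset.sum_const, mul_comm] using this
      have h1 := MvPolynomial.isWeightedHomogeneous_C (R := ZMod p) w (MvPolynomial.coeff u P)
      have h3 := h1.mul h2
      rw [zero_add] at h3
      have h4 : ∑ i ∈ u.support, u i * (if i = i₀ then 1 else 0) = u i₀ := by
        simp only [mul_ite, mul_one, mul_zero, Finset.sum_ite_eq']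
        split_ifs with h
        · rfl
        · exact (Finsupp.notMem_support_iff.mp h).symm
      rwa [h4] at h3
    have hweight := hhom (MvPolynomial.mem_support_iff.mp hEu)
    rw [← hweight]
    rw [Finsupp.weight_apply, Finsupp.sum_fintype _ _ (fun _ => by simp)]
    rw [Fintype.sum_prod_type]
    simp [hw, smul_eq_mul, mul_ite, mul_one, mul_zero]
  -- individual degrees at most p-1
  have hEle : ∀ E ∈ Q.support, ∀ j i, E (j, i) ≤ p - 1 := by
    intro E hE j i
    obtain ⟨u, hu, hEsum⟩ := hsupp E hE
    calc E (j, i) ≤ ∑ j' : Fin p, E (j', i) :=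
          Finset.single_le_sum (f := fun j' => E (j', i)) (fun _ _ => Nat.zero_le _)
            (Finset.mem_univ j)
      _ = u i := hEsum i
      _ ≤ P.degreeOf i := by rw [MvPolynomial.degreeOf_eq_sup]; exact Finset.le_sup (f := fun m : (Fin n →₀ ℕ) => m i) hu
      _ ≤ p - 1 := hPred i
  have hElt : ∀ E ∈ Q.support, ∀ j i, E (j, i) < p := fun E hE j i =>
    lt_of_le_of_lt (hEle E hE j i) (Nat.sub_lt hp0 one_pos)
  -- total degree at most d
  have hEtot : ∀ E ∈ Q.support, ∑ j : Fin p, ∑ i : Fin n, E (j, i) ≤ d := by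
    intro E hE
    obtain ⟨u, hu, hEsum⟩ := hsupp E hE
    rw [Finset.sum_comm]
    calc ∑ i : Fin n, ∑ j : Fin p, E (j, i) = ∑ i : Fin n, u i := by simp [hEsum]
      _ = u.sum fun _ e => e := (Finsupp.sum_fintype u (fun _ e => e) fun _ => rfl).symm
      _ ≤ P.totalDegree := MvPolynomial.le_totalDegree hu
      _ ≤ d := hPd
  -- selection of a low-degree coordinate
  set jsel : ((Fin p × Fin n) →₀ ℕ) → Fin p := fun E =>
    if h : ∃ j : Fin p, ∑ i : Fin n, E (j, i) ≤ d / p then h.choose else ⟨0, hp0⟩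
    with hjseldef
  set esel : ((Fin p × Fin n) →₀ ℕ) → (Fin n → Fin p) := fun E i =>
    ⟨E (jsel E, i) % p, Nat.mod_lt _ hp0⟩ with heseldef
  have hjsel : ∀ E ∈ Q.support, ∑ i : Fin n, E (jsel E, i) ≤ d / p := by
    intro E hE
    have hex : ∃ j : Fin p, ∑ i : Fin n, E (j, i) ≤ d / p := by
      by_contra hc
      push_neg at hc
      have h1 : p * (d / p + 1) ≤ ∑ j : Fin p, ∑ i : Fin n, E (j, i) := by
        calc p * (d / p + 1) = ∑ _j : Fin p, (d / p + 1) := by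
              simp [Finset.sum_const, mul_comm]
          _ ≤ _ := Finset.sum_le_sum fun j _ => hc j
      have h2 : d < (d / p + 1) * p := (Nat.div_lt_iff_lt_mul hp0).mp (Nat.lt_succ_self _)
      have := hEtot E hE
      rw [mul_comm] at h2
      omega
    rw [hjseldef]
    simp only [dif_pos hex]
    exact hex.choose_spec
  have heselval : ∀ E ∈ Q.support, ∀ i, ((esel E i : ℕ)) = E (jsel E, i) := by
    intro E hE i
    rw [heseldef]
    exact Nat.mod_eq_of_lt (hElt E hE _ _)
  -- the tensor as a sum over the support of Q
  have hT : ∀ g : Fin p → Fin n → ZMod p, f (∑ j, g j) =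
      ∑ E ∈ Q.support, MvPolynomial.coeff E Q *
        ∏ j : Fin p, ∏ i : Fin n, g j i ^ E (j, i) := by
    intro g
    rw [← hPf (∑ j, g j)]
    have h1 : MvPolynomial.eval (fun v : Fin p × Fin n => g v.1 v.2) Q
        = MvPolynomial.eval (∑ j, g j) P := by
      rw [hQdef]
      have h2 := MvPolynomial.aeval_bind₁ (R := ZMod p)
        (fun v : Fin p × Fin n => g v.1 v.2) S P
      have h3 : (fun i => MvPolynomial.aeval (fun v : Fin p × Fin n => g v.1 v.2) (S i))
          = (∑ j, g j) := by
        funext i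
        simp [hS, Finset.sum_apply]
      have h4 : MvPolynomial.aeval (R := ZMod p)
          (fun v : Fin p × Fin n => g v.1 v.2) (MvPolynomial.bind₁ S P)
          = MvPolynomial.eval (fun v : Fin p × Fin n => g v.1 v.2) (MvPolynomial.bind₁ S P) :=
        rfl
      have h5 : MvPolynomial.aeval (R := ZMod p)
          (fun i => MvPolynomial.aeval (fun v : Fin p × Fin n => g v.1 v.2) (S i)) P
          = MvPolynomial.eval
          (fun i => MvPolynomial.aeval (fun v : Fin p × Fin n => g v.1 v.2) (S i)) P := rfl
      rw [← h4, h2, h5, h3]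
    rw [← h1, MvPolynomial.eval_eq']
    refine Finset.sum_congr rfl fun E _ => ?_
    congr 1
    exact Fintype.prod_prod_type _
  -- the slice-rank decomposition
  set K := Finset.univ.filter fun e : Fin n → Fin p => ∑ i, (e i : ℕ) ≤ d / p with hK
  set φ : (Fin p × {x // x ∈ K}) ≃ Fin (p * K.card) :=
    (Equiv.prodCongr (Equiv.refl (Fin p)) K.equivFin).trans finProdFinEquiv with hφ
  refine ⟨fun r => (φ.symm r).1,
    fun r x => ∏ t : Fin n, x t ^ (((φ.symm r).2 : Fin n → Fin p) t : ℕ),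
    fun r g => ∑ E ∈ Q.support.filter
        (fun E => (jsel E, esel E) = ((φ.symm r).1, ((φ.symm r).2 : Fin n → Fin p))),
      MvPolynomial.coeff E Q *
        ∏ j ∈ Finset.univ.erase (φ.symm r).1, ∏ t : Fin n, g j t ^ E (j, t),
    ?_, ?_⟩
  · intro r g g' hgg'
    refine Finset.sum_congr rfl fun E _ => ?_
    congr 1
    refine Finset.prod_congr rfl fun j hj => ?_
    rw [hgg' j (Finset.ne_of_mem_erase hj)]
  · intro g
    show f (∑ j, g j) = _
    rw [hT g]
    have hre : ∀ F : Fin (p * K.card) → ZMod p,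
        ∑ r, F r = ∑ x : Fin p × {x // x ∈ K}, F (φ x) :=
      fun F => (Equiv.sum_comp φ F).symm
    rw [hre]
    simp only [Equiv.symm_apply_apply]
    rw [Fintype.sum_prod_type]
    have hmaps : ∀ E ∈ Q.support, (jsel E, esel E) ∈ Finset.univ ×ˢ K := by
      intro E hE
      refine Finset.mem_product.mpr ⟨Finset.mem_univ _, ?_⟩
      rw [hK]
      refine Finset.mem_filter.mpr ⟨Finset.mem_univ _, ?_⟩
      calc ∑ i, ((esel E i : ℕ)) = ∑ i, E (jsel E, i) :=
            Finset.sum_congr rfl fun i _ => heselval E hE i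
        _ ≤ d / p := hjsel E hE
    rw [← Finset.sum_fiberwise_of_maps_to hmaps
      (fun E => MvPolynomial.coeff E Q * ∏ j : Fin p, ∏ i : Fin n, g j i ^ E (j, i))]
    rw [Finset.sum_product]
    refine Finset.sum_congr rfl fun j _ => ?_
    refine Eq.trans (Finset.sum_congr rfl fun e he => ?_)
      (Finset.sum_coe_sort K (fun e => (∏ t : Fin n, g j t ^ (e t : ℕ)) *
      ∑ E ∈ Q.support.filter (fun E => (jsel E, esel E) = (j, e)),
        MvPolynomial.coeff E Q *
          ∏ j' ∈ Finset.univ.erase j, ∏ t : Fin n, g j' t ^ E (j', t))).symm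
    rw [Finset.mul_sum]
    refine Finset.sum_congr rfl fun E hEf => ?_
    obtain ⟨hEQ, hEsel⟩ := Finset.mem_filter.mp hEf
    have hj1 : jsel E = j := (Prod.mk.injEq _ _ _ _ ▸ hEsel).1
    have hj2 : esel E = (e : Fin n → Fin p) := (Prod.mk.injEq _ _ _ _ ▸ hEsel).2
    have hmod : ∀ t, ((e : Fin n → Fin p) t : ℕ) = E (j, t) := by
      intro t
      rw [← hj2, ← hj1]
      exact heselval E hEQ t
    have hsplit : ∏ j' : Fin p, ∏ t : Fin n, g j' t ^ E (j', t)
        = (∏ t : Fin n, g j t ^ E (j, t)) *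
          ∏ j' ∈ Finset.univ.erase j, ∏ t : Fin n, g j' t ^ E (j', t) :=
      (Finset.mul_prod_erase Finset.univ _ (Finset.mem_univ j)).symm
    rw [hsplit]
    rw [show (∏ t : Fin n, g j t ^ ((e : Fin n → Fin p) t : ℕ))
        = ∏ t : Fin n, g j t ^ E (j, t) from
      Finset.prod_congr rfl fun t _ => by rw [hmod t]]
    ring
end

section
/- (Tao) Let F be a field, D a positive integer, and k ≥ 2. Let δ : [D]^k → F be the diagonal tensor defined by δ(j_1,…,j_k) = 1 if j_1 = j_2 = … = j_k and δ(j_1,…,j_k) = 0 otherwise. Then the slice rank of δ is exactly D. -/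
section

open Module Matrix

variable {F : Type*} [Field F] {I J : Type*}

namespace SliceRankLE

theorem of_fintype {k : ℕ} {T : (Fin k → I) → F} {ι : Type*} [Fintype ι] (l : ι → Fin k)
    (a : ι → I → F) (b : ι → (Fin k → I) → F)
    (hb : ∀ i g g', (∀ j, j ≠ l i → g j = g' j) → b i g = b i g')
    (hT : ∀ g, T g = ∑ i, a i (g (l i)) * b i g) :
    SliceRankLE k (Fintype.card ι) T := by
  let e := (Fintype.equivFin ι).symm
  exact ⟨l ∘ e, a ∘ e, b ∘ e, fun i => hb (e i),
    fun g => (hT g).trans (e.sum_comp fun i => a i (g (l i)) * b i g).symm⟩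

theorem comp {k R : ℕ} {T : (Fin k → I) → F} (h : SliceRankLE k R T) (f : J → I) :
    SliceRankLE k R (fun g => T (f ∘ g)) := by
  obtain ⟨l, a, b, hb, hT⟩ := h
  exact ⟨l, fun i y => a i (f y), fun i g => b i (f ∘ g),
    fun i g g' hg => hb i _ _ fun j hj => congrArg f (hg j hj), fun g => hT (f ∘ g)⟩

theorem rank_le [Fintype I] {R : ℕ} {T : (Fin 2 → I) → F} (h : SliceRankLE 2 R T) :
    (of fun x y => T ![x, y]).rank ≤ R := by
  obtain ⟨l, a, b, hb, hT⟩ := h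
  let U : Matrix I (Fin R) F := of fun x i => if l i = 0 then a i x else b i ![x, x]
  let V : Matrix (Fin R) I F := of fun i y => if l i = 0 then b i ![y, y] else a i y
  have hUV : of (fun x y => T ![x, y]) = U * V := by
    ext x y
    simp only [of_apply, hT, mul_apply, U, V]
    refine Finset.sum_congr rfl fun i _ => ?_
    rcases Fin.exists_fin_two.mp ⟨l i, rfl⟩ with hi | hi
    · rw [if_pos hi, if_pos hi, hi, hb i ![x, y] ![y, y]]
      · rfl
      · simp [Fin.forall_fin_two, hi]
    · rw [if_neg (by simp [hi]), if_neg (by simp [hi]), hi, hb i ![x, y] ![x, x], mul_comm]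
      · rfl
      · simp [Fin.forall_fin_two, hi]
  calc _ = (U * V).rank := by rw [hUV]
    _ ≤ U.rank := rank_mul_le_left U V
    _ ≤ R := by simpa using rank_le_card_width U

end SliceRankLE

theorem sliceRankLE_sum_mul_cons [Fintype I] {k R : ℕ} {T : (Fin (k + 1) → I) → F}
    (l : Fin R → Fin (k + 1)) (a : Fin R → I → F) (b : Fin R → (Fin (k + 1) → I) → F)
    (hb : ∀ i g g', (∀ j, j ≠ l i → g j = g' j) → b i g = b i g')
    (hT : ∀ g, T g = ∑ i, a i (g (l i)) * b i g) (v : I → F) (hv : ∀ i, l i = 0 → a i ⬝ᵥ v = 0) :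
    SliceRankLE k (Fintype.card {i // l i ≠ 0}) (fun g => ∑ x, v x * T (Fin.cons x g)) := by
  refine SliceRankLE.of_fintype (fun i => (l i).pred i.2) (fun i => a i)
    (fun i g => ∑ x, v x * b i (Fin.cons x g)) ?_ fun g => ?_
  · intro i g g' hg
    refine Finset.sum_congr rfl fun x _ => congrArg (v x * ·) (hb i _ _ fun j hj => ?_)
    cases j using Fin.cases with
    | zero => rfl
    | succ j =>
      simp only [Fin.cons_succ]
      exact hg j fun h => hj (h ▸ Fin.succ_pred _ _)
  have hvanish : ∀ i, l i = 0 →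
      ∑ x, v x * (a i ((Fin.cons x g : Fin (k + 1) → I) (l i)) * b i (Fin.cons x g)) = 0 := by
    intro i hi
    rcases isEmpty_or_nonempty I with hI | ⟨⟨x₀⟩⟩
    · simp
    -- `b i` ignores the contracted coordinate, so it factors out of the sum
    have hconst : ∀ x, b i (Fin.cons x g) = b i (Fin.cons x₀ g) := fun x =>
      hb i _ _ fun j hj => by
        cases j using Fin.cases with
        | zero => exact absurd hi.symm hj
        | succ j => rfl
    simp only [hi, Fin.cons_zero, hconst, mul_left_comm (v _), ← mul_assoc, ← Finset.sum_mul]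
    simpa [dotProduct, mul_comm] using Or.inl (hv i hi)
  calc ∑ x, v x * T (Fin.cons x g)
      = ∑ i, ∑ x, v x * (a i ((Fin.cons x g : Fin (k + 1) → I) (l i)) * b i (Fin.cons x g)) := by
        simp only [hT, Finset.mul_sum]
        exact Finset.sum_comm
    _ = ∑ i : {i // l i ≠ 0},
          ∑ x, v x * (a i ((Fin.cons x g : Fin (k + 1) → I) (l i)) * b i (Fin.cons x g)) := by
        rw [← Fintype.sum_subtype_add_sum_subtype (fun i => l i = 0),
          Finset.sum_eq_zero fun (i : {i // l i = 0}) _ => hvanish i i.2, zero_add]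
    _ = _ := by
        refine Finset.sum_congr rfl fun i _ => ?_
        have hshift : ∀ x, (Fin.cons x g : Fin (k + 1) → I) (l i) = g ((l i).pred i.2) := by
          intro x
          conv_lhs => rw [← Fin.succ_pred (l i) i.2]
          exact Fin.cons_succ _ _ _
        simp only [hshift, Finset.mul_sum, mul_left_comm (v _)]

theorem Submodule.exists_finrank_le_card_support [Fintype I] (K : Submodule F (I → F)) :
    ∃ v ∈ K, finrank F K ≤ Nat.card {x // v x ≠ 0} := by
  let φ : I → Dual F K := fun x => (LinearMap.proj x).comp K.subtype
  obtain ⟨κ, e, he, hspan, hli⟩ := exists_linearIndependent' F φ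
  have : Fintype κ := Fintype.ofInjective e he
  let ev : K →ₗ[F] κ → F := LinearMap.pi fun j => φ (e j)
  have hev_inj : Function.Injective ev := by
    rw [← LinearMap.ker_eq_bot, Submodule.eq_bot_iff]
    intro w hw
    have hφ : span F (Set.range φ) ≤ LinearMap.ker (Dual.eval F K w) := by
      rw [← hspan, Submodule.span_le]
      rintro _ ⟨j, rfl⟩
      exact congrFun hw j
    exact Subtype.ext <| funext fun x => hφ (Submodule.subset_span ⟨x, rfl⟩)
  have hdim : finrank F K = Fintype.card κ := le_antisymm
    (by simpa using LinearMap.finrank_le_finrank_of_injective hev_inj)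
    (by simpa using hli.fintype_card_le_finrank)
  obtain ⟨w, hw⟩ := (LinearMap.injective_iff_surjective_of_finrank_eq_finrank
    (by simpa using hdim)).mp hev_inj (fun _ => 1)
  refine ⟨w, w.2, hdim.trans_le ?_⟩
  rw [← Nat.card_eq_fintype_card]
  refine Nat.card_le_card_of_injective (fun j => ⟨e j, ?_⟩) fun j j' h => he congr(($h).1)
  have : w.1 (e j) = 1 := congrFun hw j
  simp [this]

section diagTensor

variable [DecidableEq I] [DecidableEq J]

def diagTensor {k : ℕ} (c : I → F) (g : Fin (k + 1) → I) : F :=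
  if ∀ j, g j = g 0 then c (g 0) else 0

theorem diagTensor_comp {k : ℕ} (c : I → F) {f : J → I} (hf : Function.Injective f)
    (g : Fin (k + 1) → J) : diagTensor c (f ∘ g) = diagTensor (c ∘ f) g := by
  simp only [diagTensor, Function.comp_apply, hf.eq_iff]

theorem sum_mul_diagTensor_cons [Fintype I] {k : ℕ} (c v : I → F) (g : Fin (k + 1) → I) :
    ∑ x, v x * diagTensor c (Fin.cons x g : Fin (k + 2) → I) = diagTensor (v * c) g := by
  have hcons : ∀ x, (∀ j, (Fin.cons x g : Fin (k + 2) → I) j = x) ↔ x = g 0 ∧ ∀ j, g j = g 0 := by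
    intro x
    simp only [Fin.forall_fin_succ (n := k + 1), Fin.cons_zero, Fin.cons_succ, true_and]
    exact ⟨fun h => ⟨(h 0).symm, fun j => (h j).trans (h 0).symm⟩, fun ⟨h0, h⟩ j => h0 ▸ h j⟩
  simp only [diagTensor, Fin.cons_zero, hcons, ite_and, mul_ite, mul_zero, Finset.sum_ite_eq',
    Finset.mem_univ, if_true, Pi.mul_apply]

theorem of_diagTensor_eq_diagonal (c : I → F) :
    of (fun x y => diagTensor c ![x, y]) = diagonal c := by
  ext x y
  by_cases h : x = y
  · subst h
    simp [diagTensor, Fin.forall_fin_two]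
  · simp [diagTensor, Fin.forall_fin_two, diagonal_apply_ne _ h, Ne.symm h]

theorem sliceRankLE_diagTensor [Fintype I] {k : ℕ} (c : I → F) :
    SliceRankLE (k + 1) (Fintype.card I) (diagTensor c) := by
  refine SliceRankLE.of_fintype (fun _ => 0) (fun x y => if y = x then c x else 0)
    (fun x g => if ∀ j, j ≠ 0 → g j = x then 1 else 0) ?_ fun g => ?_
  · intro x g g' hg
    exact if_congr (forall₂_congr fun j hj => by rw [hg j hj]) rfl rfl
  have hdiag : (∀ j, g j = g 0) ↔ ∀ j, j ≠ 0 → g j = g 0 :=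
    ⟨fun h j _ => h j, fun h j => if hj : j = 0 then hj ▸ rfl else h j hj⟩
  simp only [diagTensor, hdiag, ite_zero_mul_ite_zero, mul_one, ite_and, Finset.sum_ite_eq,
    Finset.mem_univ, if_true]

theorem card_le_of_sliceRankLE_diagTensor {k : ℕ} (hk : 1 ≤ k) [Fintype I] {R : ℕ} {c : I → F}
    (hc : ∀ x, c x ≠ 0) (h : SliceRankLE (k + 1) R (diagTensor c)) : Fintype.card I ≤ R := by
  induction k, hk using Nat.le_induction generalizing I R with
  | base =>
    classical
    simpa [of_diagTensor_eq_diagonal, rank_diagonal, hc] using h.rank_le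
  | succ k _ ih =>
    classical
    obtain ⟨l, a, b, hb, hT⟩ := h
    let M : Matrix {i // l i = 0} I F := of fun i => a i
    have hK :
        Fintype.card I ≤ finrank F (LinearMap.ker M.mulVecLin) + Fintype.card {i // l i = 0} := by
      have hrk := M.mulVecLin.finrank_range_add_finrank_ker
      rw [finrank_fintype_fun_eq_card] at hrk
      have := M.rank_le_card_height
      rw [Matrix.rank] at this
      omega
    obtain ⟨v, hvK, hv⟩ := (LinearMap.ker M.mulVecLin).exists_finrank_le_card_support
    have hcontract := sliceRankLE_sum_mul_cons l a b hb hT v fun i hi =>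
      congrFun (LinearMap.mem_ker.mp hvK) ⟨i, hi⟩
    simp only [sum_mul_diagTensor_cons] at hcontract
    have hrestrict := hcontract.comp (Subtype.val : {x // v x ≠ 0} → I)
    simp only [diagTensor_comp (v * c) Subtype.val_injective] at hrestrict
    have hsupp := ih (c := (v * c) ∘ Subtype.val) (fun x => mul_ne_zero x.2 (hc x.1)) hrestrict
    have hsplit : Fintype.card {i // l i ≠ 0} = R - Fintype.card {i // l i = 0} := by
      simp [Fintype.card_subtype_compl]
    have hzeros : Fintype.card {i // l i = 0} ≤ R := by
      simpa using Fintype.card_subtype_le (fun i => l i = 0)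
    rw [Nat.card_eq_fintype_card] at hv
    omega

end diagTensor

end

theorem slice_rank_diagonal_general (F : Type*) [Field F] (D k : ℕ) (hk : 2 ≤ k) :
    SliceRankLE k D (fun g : Fin k → Fin D => if ∀ j j', g j = g j' then (1 : F) else 0) ∧
    ∀ R : ℕ, R < D →
      ¬ SliceRankLE k R (fun g : Fin k → Fin D => if ∀ j j', g j = g j' then (1 : F) else 0) := by
  obtain ⟨m, rfl⟩ : ∃ m, k = m + 1 + 1 := ⟨k - 2, by omega⟩
  have hδ : (fun g : Fin (m + 1 + 1) → Fin D => if ∀ j j', g j = g j' then (1 : F) else 0) =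
      diagTensor fun _ => 1 := by
    funext g
    exact if_congr ⟨fun h j => h j 0, fun h j j' => (h j).trans (h j').symm⟩ rfl rfl
  rw [hδ]
  refine ⟨by simpa using sliceRankLE_diagTensor (fun _ : Fin D => (1 : F)), fun R hR h => ?_⟩
  have := card_le_of_sliceRankLE_diagTensor le_add_self (fun _ => one_ne_zero) h
  rw [Fintype.card_fin] at this
  omega

/-- **(Tao)** The diagonal `k`-fold tensor `δ : [D]^k → F`, with `δ(j, …, j) = 1` and
all other entries `0`, has slice rank exactly `D`: its slice rank is at most `D` and
not at most any `R < D`. -/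
theorem slice_rank_diagonal (F : Type*) [Field F] (D k : ℕ) (hD : 0 < D) (hk : 2 ≤ k) :
    SliceRankLE k D (fun g : Fin k → Fin D => if ∀ j j', g j = g j' then (1 : F) else 0) ∧
    ∀ R : ℕ, R < D →
      ¬ SliceRankLE k R (fun g : Fin k → Fin D => if ∀ j j', g j = g j' then (1 : F) else 0) :=
  slice_rank_diagonal_general F D k hk
end

section
/- Let 2 ≤ d ≤ n and let A = {S ⊆ [n] : |S| ≥ n − d}. Then A ∪ A = A (where A ∪ A = {S ∪ T : S, T ∈ A}), VC-dim(A ∪ A) = d, and |A| = C(n, ≤ d). In particular, the bound |A| ≤ O(n^{⌈d/2⌉}) fails when symmetric difference is replaced by union in the condition VC-dim(A △ A) ≤ d. -/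
/-!
The sets with at least `n - d` elements form an up-set, so unions of two of them stay in the
family. A shattered set `s` is disjoint from some member (the one cutting out `∅`), which has at
least `n - d` elements, so `|s| ≤ d`; conversely a `d`-set `s` is shattered, `t ⊆ s` being cut
out by `t ∪ sᶜ`. Complementation maps the family onto the sets with at most `d` elements, whence
the count.
-/

open Finset

namespace Finset

variable {α : Type*}

lemma image₂_union_self_of_isUpperSet [DecidableEq α] {𝒜 : Finset (Finset α)}
    (h𝒜 : IsUpperSet (𝒜 : Set (Finset α))) : image₂ (· ∪ ·) 𝒜 𝒜 = 𝒜 := by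
  refine Subset.antisymm (fun _ hs ↦ ?_) fun s hs ↦ mem_image₂.2 ⟨s, hs, s, hs, union_self s⟩
  obtain ⟨t, ht, u, -, rfl⟩ := mem_image₂.1 hs
  exact h𝒜 subset_union_left ht

variable [Fintype α]

lemma isUpperSet_filter_le_card (k : ℕ) :
    IsUpperSet (({s : Finset α | k ≤ #s} : Finset (Finset α)) : Set (Finset α)) :=
  fun s t hst hs ↦ (mem_filter_univ t).2 (((mem_filter_univ s).1 hs).trans (card_le_card hst))

lemma card_filter_card_le (d : ℕ) :
    #({s : Finset α | #s ≤ d} : Finset (Finset α)) =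
      ∑ i ∈ range (d + 1), (Fintype.card α).choose i := by
  rw [card_eq_sum_card_fiberwise (f := card) (t := range (d + 1))
    fun s hs ↦ mem_range.2 (Nat.lt_succ_of_le (mem_filter.1 hs).2)]
  refine sum_congr rfl fun i hi ↦ ?_
  rw [← card_univ, ← card_powersetCard]
  congr 1
  ext s
  simp only [mem_filter, mem_univ, true_and, mem_powersetCard, subset_univ, mem_range] at hi ⊢
  omega

variable [DecidableEq α]

lemma Shatters.card_add_le {𝒜 : Finset (Finset α)} {s : Finset α} {k : ℕ}
    (hs : 𝒜.Shatters s) (h𝒜 : ∀ t ∈ 𝒜, k ≤ #t) : #s + k ≤ Fintype.card α := by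
  obtain ⟨t, ht, hst⟩ := hs (empty_subset s)
  calc #s + k ≤ #s + #t := Nat.add_le_add_left (h𝒜 t ht) _
    _ = #(s ∪ t) := (card_union_of_disjoint (disjoint_iff_inter_eq_empty.2 hst)).symm
    _ ≤ Fintype.card α := card_le_univ _

lemma shatters_filter_le_card_of_le_card_compl {s : Finset α} {k : ℕ} (hs : k ≤ #sᶜ) :
    ({s : Finset α | k ≤ #s} : Finset (Finset α)).Shatters s := by
  intro t ht
  refine ⟨t ∪ sᶜ, ?_, ?_⟩
  · simpa using hs.trans (card_le_card subset_union_right)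
  · rw [inter_union_distrib_left, inter_compl, union_empty, inter_eq_right.2 ht]

lemma vcDim_filter_le_card {k : ℕ} (hk : k ≤ Fintype.card α) :
    ({s : Finset α | k ≤ #s} : Finset (Finset α)).vcDim = Fintype.card α - k := by
  refine le_antisymm (Finset.sup_le fun s hs ↦ ?_) ?_
  · have := (mem_shatterer.1 hs).card_add_le (k := k) (by simp)
    omega
  · obtain ⟨s, -, hs⟩ := exists_subset_card_eq (s := (univ : Finset α)) (n := Fintype.card α - k)
      (by simp)
    rw [← hs]
    exact (shatters_filter_le_card_of_le_card_compl (by rw [card_compl, hs]; omega)).card_le_vcDim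

lemma card_filter_le_card_eq_card_filter_card_le {k : ℕ} (hk : k ≤ Fintype.card α) :
    #({s : Finset α | k ≤ #s} : Finset (Finset α)) =
      #({s : Finset α | #s ≤ Fintype.card α - k} : Finset (Finset α)) := by
  refine card_bij' (fun s _ ↦ sᶜ) (fun s _ ↦ sᶜ) ?_ ?_ (by simp) (by simp) <;>
    · intro s hs
      simp only [mem_filter, mem_univ, true_and, card_compl] at hs ⊢
      omega

end Finset

theorem union_counterexample_general (n d : ℕ) (hdn : d ≤ n)
    (A : Finset (Finset (Fin n)))
    (hA : A = Finset.univ.filter fun S : Finset (Fin n) => n - d ≤ S.card) :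
    Finset.image₂ (· ∪ ·) A A = A ∧
    (Finset.image₂ (· ∪ ·) A A).vcDim = d ∧
    A.card = ∑ i ∈ Finset.range (d + 1), n.choose i := by
  have hunion : image₂ (· ∪ ·) A A = A := by
    rw [hA]
    exact image₂_union_self_of_isUpperSet (isUpperSet_filter_le_card (n - d))
  have hnd : n - d ≤ Fintype.card (Fin n) := by simp
  refine ⟨hunion, ?_, ?_⟩
  · rw [hunion, hA, vcDim_filter_le_card hnd, Fintype.card_fin, Nat.sub_sub_self hdn]
  · rw [hA, card_filter_le_card_eq_card_filter_card_le hnd, card_filter_card_le,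
      Fintype.card_fin, Nat.sub_sub_self hdn]

/-- For `2 ≤ d ≤ n` the family `A = {S ⊆ [n] : |S| ≥ n - d}` satisfies `A ∪ A = A`,
`VC-dim(A ∪ A) = d`, and `|A| = C(n, ≤ d)`.  (Hence the sumset bound
`|A| ≤ O(n^{⌈d/2⌉})` fails when symmetric difference is replaced by union.) -/
theorem union_counterexample (n d : ℕ) (hd : 2 ≤ d) (hdn : d ≤ n)
    (A : Finset (Finset (Fin n)))
    (hA : A = Finset.univ.filter fun S : Finset (Fin n) => n - d ≤ S.card) :
    Finset.image₂ (· ∪ ·) A A = A ∧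
    (Finset.image₂ (· ∪ ·) A A).vcDim = d ∧
    A.card = ∑ i ∈ Finset.range (d + 1), n.choose i :=
  union_counterexample_general n d hdn A hA
end
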